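/- arXiv:math/0410363 — 3 statements merged into one kernel-verified Lean document; each statement's English description precedes it below -/
import Mathlib

section
/- With C the tensor product complex of the two-term complexes ℤ^{m_i} → ℤ (all basis vectors mapping to 1), and K a field, the dimension over K of the kernel of the degree-j differential ∂'_j ⊗ K equals z_j := σ_j + ∑_{i=0}^{j−1} (−1)^{i+j} σ_i, for every 0 ≤ j ≤ r. -/
open Finset

/-- The `i`-th elementary symmetric function of `m 0, …, m (r-1)`, as an integer. -/
def esym (r : ℕ) (m : Fin r → ℕ) (i : ℕ) : ℤ :=
  ∑ S ∈ Finset.univ.powersetCard i, ∏ j ∈ S, (m j : ℤ)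

/-- `z_j := σ_j + ∑_{i=0}^{j−1} (−1)^{i+j} σ_i`. -/
def zval (r : ℕ) (m : Fin r → ℕ) (j : ℕ) : ℤ :=
  esym r m j + ∑ i ∈ Finset.range j, (-1 : ℤ) ^ (i + j) * esym r m i

/-- Index set for the degree-`k` part of the tensor product complex
`C¹ ⊗ ⋯ ⊗ C^r`, where `C^i` is the two-term complex `ℤ^{m_i} → ℤ`. -/
def Idx (r : ℕ) (m : Fin r → ℕ) (k : ℕ) : Type :=
  Σ S : {S : Finset (Fin r) // S.card = k}, ∀ i : Fin r, i ∈ S.1 → Fin (m i)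

/-- The value of the signed Leibniz differential on a basis element (each factor's
differential sends every standard basis vector to `1`). -/
noncomputable def bval (K : Type*) [Field K] (r : ℕ) (m : Fin r → ℕ) (k : ℕ)
    (b : Idx r m (k + 1)) : Idx r m k →₀ K :=
  ∑ p ∈ b.1.1.attach,
    ((-1 : K) ^ ((b.1.1.filter (fun x => x < p.1)).card)) •
      Finsupp.single
        ⟨⟨b.1.1.erase p.1, by rw [Finset.card_erase_of_mem p.2, b.1.2]; rfl⟩,
          fun i hi => b.2 i (Finset.mem_of_mem_erase hi)⟩ 1

/-- The differential of the tensor product complex, from degree `k+1` to degree `k`. -/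
noncomputable def Dmap (K : Type*) [Field K] (r : ℕ) (m : Fin r → ℕ) (k : ℕ) :
    (Idx r m (k + 1) →₀ K) →ₗ[K] (Idx r m k →₀ K) :=
  Finsupp.lsum K fun b => LinearMap.toSpanSingleton K _ (bval K r m k b)

/-- The degree-`j` differential `∂'_j : C_j → C_{j−1}` (zero in degree `0`). -/
noncomputable def bnd (K : Type*) [Field K] (r : ℕ) (m : Fin r → ℕ) :
    ∀ j : ℕ, (Idx r m j →₀ K) →ₗ[K] (Idx r m (j - 1) →₀ K)
  | 0 => 0
  | (k + 1) => Dmap K r m k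


-- ===== auxiliary development =====

attribute [local instance] Classical.propDecidable

section
variable {r : ℕ} {m : Fin r → ℕ}

theorem Idx.ext {k : ℕ} {a b : Idx r m k} (h1 : a.1.1 = b.1.1)
    (h2 : ∀ i (ha : i ∈ a.1.1) (hb : i ∈ b.1.1), a.2 i ha = b.2 i hb) : a = b := by
  obtain ⟨⟨S, hS⟩, f⟩ := a; obtain ⟨⟨S', hS'⟩, g⟩ := b
  dsimp at h1 h2; subst h1
  have : f = g := by funext i hi; exact h2 i hi hi
  subst this; rfl

def er {k : ℕ} (b : Idx r m (k+1)) (p : Fin r) (hp : p ∈ b.1.1) : Idx r m k :=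
  ⟨⟨b.1.1.erase p, by rw [Finset.card_erase_of_mem hp, b.1.2]; rfl⟩,
    fun i hi => b.2 i (Finset.mem_of_mem_erase hi)⟩

def ins {k : ℕ} (b : Idx r m k) (p : Fin r) (hp : p ∉ b.1.1) (hmp : 0 < m p) :
    Idx r m (k+1) :=
  ⟨⟨insert p b.1.1, by rw [Finset.card_insert_of_notMem hp, b.1.2]⟩,
    fun i hi => if h : i ∈ b.1.1 then b.2 i h else
      ⟨0, by
        have hip : i = p := by
          rcases Finset.mem_insert.mp hi with h' | h'
          · exact h'
          · exact absurd h' h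
        rw [hip]; exact hmp⟩⟩

def Tset {k : ℕ} (b : Idx r m k) : Finset (Fin r) :=
  b.1.1.filter (fun i => ∃ h : i ∈ b.1.1, (b.2 i h).val ≠ 0)

def zo {k : ℕ} (b : Idx r m k) (R : Finset (Fin r)) : Idx r m k :=
  ⟨b.1, fun i hi => if i ∈ R then b.2 i hi else ⟨0, (b.2 i hi).pos⟩⟩

@[simp] lemma er_set {k} (b : Idx r m (k+1)) (p hp) : (er b p hp).1.1 = b.1.1.erase p := rfl
@[simp] lemma ins_set {k} (b : Idx r m k) (p hp hmp) :
    (ins b p hp hmp).1.1 = insert p b.1.1 := rfl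
@[simp] lemma zo_set {k} (b : Idx r m k) (R) : (zo b R).1.1 = b.1.1 := rfl
@[simp] lemma er_val {k} (b : Idx r m (k+1)) (p hp) (i hi) :
    (er b p hp).2 i hi = b.2 i (Finset.mem_of_mem_erase hi) := rfl
@[simp] lemma zo_val {k} (b : Idx r m k) (R) (i hi) :
    (zo b R).2 i hi = if i ∈ R then b.2 i hi else ⟨0, (b.2 i hi).pos⟩ := rfl

lemma ins_val_mem {k} (b : Idx r m k) (p hp hmp) (i : Fin r) (hi : i ∈ (ins b p hp hmp).1.1)
    (h : i ∈ b.1.1) : (ins b p hp hmp).2 i hi = b.2 i h := dif_pos h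

lemma ins_val_self {k} (b : Idx r m k) (p hp hmp) (hi : p ∈ (ins b p hp hmp).1.1) :
    ((ins b p hp hmp).2 p hi).val = 0 := by
  show ((if h : p ∈ b.1.1 then b.2 p h else _ : Fin (m p))).val = 0
  rw [dif_neg hp]

lemma Tset_subset {k} (b : Idx r m k) : Tset b ⊆ b.1.1 := Finset.filter_subset _ _

lemma sum_attach_dite {M : Type*} [AddCommMonoid M] (S : Finset (Fin r))
    (g : ∀ p ∈ S, M) :
    ∑ p ∈ S.attach, g p.1 p.2 = ∑ p : Fin r, if h : p ∈ S then g p h else 0 := by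
  rw [← Finset.sum_subset (Finset.subset_univ S) (fun x _ hx => dif_neg hx)]
  rw [← Finset.sum_attach S (fun p => if h : p ∈ S then g p h else 0)]
  apply Finset.sum_congr rfl
  intro p _
  rw [dif_pos p.2]

lemma mem_Tset {k} (b : Idx r m k) (i : Fin r) (hi : i ∈ b.1.1) :
    i ∈ Tset b ↔ (b.2 i hi).val ≠ 0 := by
  unfold Tset
  simp only [Finset.mem_filter]
  constructor
  · rintro ⟨-, h, hv⟩; exact hv
  · intro hv; exact ⟨hi, hi, hv⟩

-- Tset stability lemmas
lemma Tset_er {k} (b : Idx r m (k+1)) (p : Fin r) (hp : p ∈ b.1.1)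
    (hz : (b.2 p hp).val = 0) : Tset (er b p hp) = Tset b := by
  ext i
  by_cases hi : i ∈ b.1.1.erase p
  · erw [mem_Tset _ i hi, er_val, mem_Tset b i (Finset.mem_of_mem_erase hi)]
  · constructor
    · intro h; exact absurd (Tset_subset _ h) hi
    · intro h
      exfalso
      have hiS : i ∈ b.1.1 := Tset_subset b h
      have : i = p := by
        by_contra hne
        exact hi (Finset.mem_erase.mpr ⟨hne, hiS⟩)
      subst this
      rw [mem_Tset b i hiS] at h
      exact h hz

lemma Tset_ins {k} (b : Idx r m k) (p hp hmp) : Tset (ins b p hp hmp) = Tset b := by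
  ext i
  by_cases hip : i = p
  · subst hip
    constructor
    · intro h
      have := (mem_Tset _ i (Finset.mem_insert_self _ _)).mp h
      exact absurd (ins_val_self b i hp hmp _) this
    · intro h; exact absurd (Tset_subset b h) hp
  · by_cases hi : i ∈ b.1.1
    · erw [mem_Tset b i hi,
        mem_Tset _ i (by simp [Finset.mem_insert, hi] : i ∈ (ins b p hp hmp).1.1),
        ins_val_mem b p hp hmp i _ hi]
    · constructor
      · intro h
        have := Tset_subset _ h
        simp only [ins_set, Finset.mem_insert] at this
        tauto
      · intro h; exact absurd (Tset_subset b h) hi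

lemma Tset_zo {k} (b : Idx r m k) (R : Finset (Fin r)) (hR : R ⊆ Tset b) :
    Tset (zo b R) = R := by
  ext i
  by_cases hi : i ∈ b.1.1
  · erw [mem_Tset (zo b R) i hi, zo_val]
    constructor
    · intro h
      by_contra hiR
      rw [if_neg hiR] at h
      exact h rfl
    · intro hiR
      rw [if_pos hiR]
      exact (mem_Tset b i hi).mp (hR hiR)
  · constructor
    · intro h; exact absurd (Tset_subset _ h) hi
    · intro h; exact absurd (Tset_subset b (hR h)) hi

-- index identities
lemma er_ins {k} (b : Idx r m k) (p hp hmp) :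
    er (ins b p hp hmp) p (Finset.mem_insert_self _ _) = b := by
  apply Idx.ext
  · exact Finset.erase_insert hp
  · intro i ha hb
    exact ins_val_mem b p hp hmp i (Finset.mem_of_mem_erase ha) hb

lemma ins_er {k} (b : Idx r m (k+1)) (p : Fin r) (hp : p ∈ b.1.1)
    (hz : (b.2 p hp).val = 0) (hmp : 0 < m p) :
    ins (er b p hp) p (Finset.notMem_erase _ _) hmp = b := by
  apply Idx.ext
  · exact Finset.insert_erase hp
  · intro i ha hb
    by_cases h : i ∈ b.1.1.erase p
    · erw [ins_val_mem (er b p hp) p _ hmp i _ h, er_val]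
    · have hip : i = p := by
        change i ∈ insert p (b.1.1.erase p) at ha
        rw [Finset.mem_insert] at ha
        tauto
      subst hip
      apply Fin.ext
      have hv : ((ins (er b i hp) i (Finset.notMem_erase _ _) hmp).2 i ha).val = 0 :=
        ins_val_self _ i _ hmp ha
      rw [hv]
      exact hz.symm

lemma er_er {k} (b : Idx r m (k+2)) (p q : Fin r) (hp : p ∈ b.1.1) (hq : q ∈ b.1.1)
    (hpq : p ≠ q) :
    er (er b p hp) q (Finset.mem_erase.mpr ⟨hpq.symm, hq⟩)
      = er (er b q hq) p (Finset.mem_erase.mpr ⟨hpq, hp⟩) := by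
  apply Idx.ext
  · exact Finset.erase_right_comm
  · intro i ha hb; rfl

lemma zo_er {k} (b : Idx r m (k+1)) (R : Finset (Fin r)) (p : Fin r) (hp : p ∈ b.1.1) :
    er (zo b R) p hp = zo (er b p hp) R := by
  apply Idx.ext
  · rfl
  · intro i ha hb; rfl

lemma zo_congr_erase {k} (b : Idx r m k) (R : Finset (Fin r)) (p : Fin r)
    (hp : p ∉ b.1.1) : zo b R = zo b (R.erase p) := by
  apply Idx.ext
  · rfl
  · intro i ha hb
    have hip : i ≠ p := fun h => hp (h ▸ ha)
    have hmem : (i ∈ R.erase p) = (i ∈ R) := by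
      simp [Finset.mem_erase, hip]
    simp only [zo_val, hmem]

-- sign lemmas
def sgn (K : Type*) [Field K] (X : Finset (Fin r)) (p : Fin r) : K :=
  (-1) ^ ((X.filter (fun x => x < p)).card)

variable {K : Type*} [Field K]

lemma sgn_insert (X : Finset (Fin r)) (q p : Fin r) (hq : q ∉ X) :
    sgn K (insert q X) p = (if q < p then -1 else 1) * sgn K X p := by
  unfold sgn
  rw [Finset.filter_insert]
  split
  · rw [Finset.card_insert_of_notMem (fun h => hq (Finset.mem_of_mem_filter _ h)), pow_succ]
    ring
  · ring

lemma sgn_erase (X : Finset (Fin r)) (q p : Fin r) (hq : q ∈ X) :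
    sgn K (X.erase q) p = (if q < p then -1 else 1) * sgn K X p := by
  conv_rhs => rw [← Finset.insert_erase hq]
  rw [sgn_insert _ q p (Finset.notMem_erase _ _)]
  split <;> ring

lemma sgn_mul_self (X : Finset (Fin r)) (p : Fin r) : sgn K X p * sgn K X p = 1 := by
  unfold sgn
  rw [← pow_add, ← two_mul, pow_mul]
  norm_num

lemma sgn_ne_zero (X : Finset (Fin r)) (p : Fin r) : (sgn K X p) ≠ 0 := by
  unfold sgn
  apply pow_ne_zero
  norm_num

-- antisymmetric product identity for ∂∂ = 0 and homotopy cancellations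
lemma sgn_skew (X : Finset (Fin r)) (p q : Fin r) (hp : p ∈ X) (hq : q ∈ X) (hpq : p ≠ q) :
    sgn K X p * sgn K (X.erase p) q = -(sgn K X q * sgn K (X.erase q) p) := by
  rw [sgn_erase X p q hp, sgn_erase X q p hq]
  rcases lt_or_gt_of_ne hpq with h | h
  · rw [if_pos h, if_neg (not_lt_of_gt h)]
    ring
  · rw [if_neg (not_lt_of_gt h), if_pos h]
    ring


lemma zo_zo {k} (b : Idx r m k) (R Q : Finset (Fin r)) (hQR : Q ⊆ R) :
    zo (zo b R) Q = zo b Q := by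
  apply Idx.ext
  · rfl
  · intro i ha hb
    by_cases hiQ : i ∈ Q
    · simp [zo_val, hiQ, hQR hiQ]
      exact if_pos (hQR hiQ)
    · simp [zo_val, hiQ]

lemma zo_Tset {k} (b : Idx r m k) : zo b (Tset b) = b := by
  apply Idx.ext
  · rfl
  · intro i ha hb
    by_cases hiT : i ∈ Tset b
    · simp [zo_val, hiT]
    · have h0 : (b.2 i hb).val = 0 :=
        Classical.byContradiction fun h => hiT ((mem_Tset b i hb).mpr h)
      apply Fin.ext
      show ((zo b (Tset b)).2 i ha).val = (b.2 i hb).val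
      rw [zo_val, if_neg hiT]
      exact h0.symm

lemma sum_powerset_swap {M : Type*} [AddCommMonoid M] (T : Finset (Fin r))
    (f : Finset (Fin r) → Finset (Fin r) → M) :
    ∑ R ∈ T.powerset, ∑ Q ∈ R.powerset, f R Q
      = ∑ Q ∈ T.powerset, ∑ R ∈ T.powerset.filter (fun R => Q ⊆ R), f R Q := by
  apply Finset.sum_comm'
  intro R Q
  simp only [Finset.mem_powerset, Finset.mem_filter]
  exact ⟨fun h => ⟨h, h.2.trans h.1⟩, fun h => h.1⟩

lemma sum_signs {K : Type*} [Field K] (T Q : Finset (Fin r)) (hQ : Q ⊆ T) :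
    ∑ R ∈ T.powerset.filter (fun R => Q ⊆ R), (-1:K)^((T \ R).card)
      = if Q = T then 1 else 0 := by
  rw [show ∑ R ∈ T.powerset.filter (fun R => Q ⊆ R), (-1:K)^((T \ R).card)
      = ∑ R' ∈ (T \ Q).powerset, (-1:K)^(R'.card) from ?_]
  · have hz : ∑ R' ∈ (T \ Q).powerset, (-1:K)^(R'.card)
        = ((∑ R' ∈ (T \ Q).powerset, (-1:ℤ)^(R'.card) : ℤ) : K) := by
      push_cast
      rfl
    rw [hz, Finset.sum_powerset_neg_one_pow_card, apply_ite (Int.cast : ℤ → K)]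
    simp only [Int.cast_one, Int.cast_zero]
    congr 1
    simp only [eq_iff_iff, Finset.sdiff_eq_empty_iff_subset]
    constructor
    · intro h; exact Finset.Subset.antisymm hQ h
    · intro h; rw [h]
  · apply Finset.sum_nbij' (fun R => T \ R) (fun R' => T \ R')
    · intro R hR
      simp only [Finset.mem_filter, Finset.mem_powerset] at hR
      simp only [Finset.mem_powerset]
      exact Finset.sdiff_subset_sdiff (Finset.Subset.refl T) hR.2
    · intro R' hR'
      simp only [Finset.mem_powerset] at hR'
      simp only [Finset.mem_filter, Finset.mem_powerset]
      constructor
      · exact Finset.sdiff_subset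
      · intro x hx
        simp only [Finset.mem_sdiff]
        exact ⟨hQ hx, fun hc => (Finset.mem_sdiff.mp (hR' hc)).2 hx⟩
    · intro R hR
      simp only [Finset.mem_filter, Finset.mem_powerset] at hR
      exact Finset.sdiff_sdiff_eq_self hR.1
    · intro R' hR'
      simp only [Finset.mem_powerset] at hR'
      exact Finset.sdiff_sdiff_eq_self (hR'.trans Finset.sdiff_subset)
    · intro R hR; rfl


lemma sum_signs2 {K : Type*} [Field K] (T Q : Finset (Fin r)) (hQ : Q ⊆ T) :
    ∑ R ∈ T.powerset.filter (fun R => Q ⊆ R), (-1:K)^((R \ Q).card)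
      = if Q = T then 1 else 0 := by
  rw [show ∑ R ∈ T.powerset.filter (fun R => Q ⊆ R), (-1:K)^((R \ Q).card)
      = ∑ R' ∈ (T \ Q).powerset, (-1:K)^(R'.card) from ?_]
  · have hz : ∑ R' ∈ (T \ Q).powerset, (-1:K)^(R'.card)
        = ((∑ R' ∈ (T \ Q).powerset, (-1:ℤ)^(R'.card) : ℤ) : K) := by
      push_cast
      rfl
    rw [hz, Finset.sum_powerset_neg_one_pow_card, apply_ite (Int.cast : ℤ → K)]
    simp only [Int.cast_one, Int.cast_zero]
    congr 1
    simp only [eq_iff_iff, Finset.sdiff_eq_empty_iff_subset]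
    constructor
    · intro h; exact Finset.Subset.antisymm hQ h
    · intro h; rw [h]
  · apply Finset.sum_nbij' (fun R => R \ Q) (fun R' => Q ∪ R')
    · intro R hR
      simp only [Finset.mem_filter, Finset.mem_powerset] at hR
      simp only [Finset.mem_powerset]
      exact Finset.sdiff_subset_sdiff hR.1 (Finset.Subset.refl Q)
    · intro R' hR'
      simp only [Finset.mem_powerset] at hR'
      simp only [Finset.mem_filter, Finset.mem_powerset]
      exact ⟨Finset.union_subset hQ (hR'.trans Finset.sdiff_subset),
        Finset.subset_union_left⟩
    · intro R hR
      simp only [Finset.mem_filter, Finset.mem_powerset] at hR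
      exact Finset.union_sdiff_of_subset hR.2
    · intro R' hR'
      simp only [Finset.mem_powerset] at hR'
      apply Finset.union_sdiff_cancel_left
      exact Finset.disjoint_left.mpr (fun a haQ haR' =>
        (Finset.mem_sdiff.mp (hR' haR')).2 haQ)
    · intro R hR; rfl

section Maps
variable (K : Type*) [Field K]

noncomputable def mkLin {k k' : ℕ} (v : Idx r m k → (Idx r m k' →₀ K)) :
    (Idx r m k →₀ K) →ₗ[K] (Idx r m k' →₀ K) :=
  Finsupp.lsum K fun b => LinearMap.toSpanSingleton K _ (v b)

@[simp] lemma mkLin_single {k k' : ℕ} (v : Idx r m k → (Idx r m k' →₀ K))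
    (b : Idx r m k) (c : K) :
    mkLin K v (Finsupp.single b c) = c • v b := by
  unfold mkLin
  rw [Finsupp.lsum_single, LinearMap.toSpanSingleton_apply]

noncomputable def phival {k : ℕ} (b : Idx r m k) : Idx r m k →₀ K :=
  ∑ R ∈ (Tset b).powerset, ((-1:K)^((Tset b \ R).card)) • Finsupp.single (zo b R) 1

noncomputable def psival {k : ℕ} (b : Idx r m k) : Idx r m k →₀ K :=
  ∑ R ∈ (Tset b).powerset, Finsupp.single (zo b R) (1:K)

noncomputable def Phi (k : ℕ) : (Idx r m k →₀ K) →ₗ[K] (Idx r m k →₀ K) :=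
  mkLin K (phival K)

noncomputable def Psi (k : ℕ) : (Idx r m k →₀ K) →ₗ[K] (Idx r m k →₀ K) :=
  mkLin K (psival K)

lemma Psi_Phi (k : ℕ) :
    (Psi K k).comp (Phi K k) = (LinearMap.id : (Idx r m k →₀ K) →ₗ[K] _) := by
  apply Finsupp.lhom_ext
  intro b c
  rw [LinearMap.comp_apply, LinearMap.id_apply]
  show Psi K k (mkLin K (phival K) (Finsupp.single b c)) = _
  rw [mkLin_single]
  rw [map_smul]
  unfold phival
  rw [map_sum]
  have step : ∀ R ∈ (Tset b).powerset,
      Psi K k (((-1:K)^((Tset b \ R).card)) • Finsupp.single (zo b R) 1)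
        = ∑ Q ∈ R.powerset, ((-1:K)^((Tset b \ R).card)) • Finsupp.single (zo b Q) 1 := by
    intro R hR
    rw [Finset.mem_powerset] at hR
    rw [map_smul]
    show ((-1:K)^((Tset b \ R).card)) • (mkLin K (psival K) (Finsupp.single (zo b R) 1)) = _
    rw [mkLin_single, one_smul]
    unfold psival
    rw [Tset_zo b R hR, Finset.smul_sum]
    apply Finset.sum_congr rfl
    intro Q hQ
    rw [Finset.mem_powerset] at hQ
    rw [zo_zo b R Q hQ]
  rw [Finset.sum_congr rfl step, sum_powerset_swap]
  have step2 : ∀ Q ∈ (Tset b).powerset,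
      ∑ R ∈ (Tset b).powerset.filter (fun R => Q ⊆ R),
        ((-1:K)^((Tset b \ R).card)) • Finsupp.single (zo b Q) (1:K)
      = (if Q = Tset b then (1:K) else 0) • Finsupp.single (zo b Q) (1:K) := by
    intro Q hQ
    rw [Finset.mem_powerset] at hQ
    rw [← Finset.sum_smul, sum_signs (Tset b) Q hQ]
    
  rw [Finset.sum_congr rfl step2]
  have step3 : ∀ Q ∈ (Tset b).powerset,
      ((if Q = Tset b then (1:K) else 0) • Finsupp.single (zo b Q) (1:K))
        = if Q = Tset b then Finsupp.single (zo b Q) (1:K) else 0 := by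
    intro Q _; split <;> simp
  rw [Finset.sum_congr rfl step3, Finset.sum_ite_eq' ((Tset b).powerset) (Tset b)
    (fun Q => Finsupp.single (zo b Q) (1:K))]
  rw [if_pos (Finset.mem_powerset_self _), zo_Tset]
  rw [Finsupp.smul_single, smul_eq_mul, mul_one]

lemma Phi_Psi (k : ℕ) :
    (Phi K k).comp (Psi K k) = (LinearMap.id : (Idx r m k →₀ K) →ₗ[K] _) := by
  apply Finsupp.lhom_ext
  intro b c
  rw [LinearMap.comp_apply, LinearMap.id_apply]
  show Phi K k (mkLin K (psival K) (Finsupp.single b c)) = _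
  rw [mkLin_single]
  rw [map_smul]
  unfold psival
  rw [map_sum]
  have step : ∀ R ∈ (Tset b).powerset,
      Phi K k (Finsupp.single (zo b R) (1:K))
        = ∑ Q ∈ R.powerset, ((-1:K)^((R \ Q).card)) • Finsupp.single (zo b Q) 1 := by
    intro R hR
    rw [Finset.mem_powerset] at hR
    show mkLin K (phival K) (Finsupp.single (zo b R) 1) = _
    rw [mkLin_single, one_smul]
    unfold phival
    rw [Tset_zo b R hR]
    apply Finset.sum_congr rfl
    intro Q hQ
    rw [Finset.mem_powerset] at hQ
    rw [zo_zo b R Q hQ]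
  rw [Finset.sum_congr rfl step, sum_powerset_swap]
  have step2 : ∀ Q ∈ (Tset b).powerset,
      ∑ R ∈ (Tset b).powerset.filter (fun R => Q ⊆ R),
        ((-1:K)^((R \ Q).card)) • Finsupp.single (zo b Q) (1:K)
      = (if Q = Tset b then (1:K) else 0) • Finsupp.single (zo b Q) (1:K) := by
    intro Q hQ
    rw [Finset.mem_powerset] at hQ
    rw [← Finset.sum_smul, sum_signs2 (Tset b) Q hQ]
  rw [Finset.sum_congr rfl step2]
  have step3 : ∀ Q ∈ (Tset b).powerset,
      ((if Q = Tset b then (1:K) else 0) • Finsupp.single (zo b Q) (1:K))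
        = if Q = Tset b then Finsupp.single (zo b Q) (1:K) else 0 := by
    intro Q _; split <;> simp
  rw [Finset.sum_congr rfl step3, Finset.sum_ite_eq' ((Tset b).powerset) (Tset b)
    (fun Q => Finsupp.single (zo b Q) (1:K))]
  rw [if_pos (Finset.mem_powerset_self _), zo_Tset]
  rw [Finsupp.smul_single, smul_eq_mul, mul_one]

noncomputable def PhiE (k : ℕ) : (Idx r m k →₀ K) ≃ₗ[K] (Idx r m k →₀ K) :=
  LinearEquiv.ofLinear (Phi K k) (Psi K k) (Phi_Psi K k) (Psi_Phi K k)

lemma sdiff_insert_card {T R : Finset (Fin r)} {p : Fin r} (hp : p ∈ T) (hpR : p ∉ R) :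
    (T \ insert p R).card + 1 = (T \ R).card := by
  have h1 : (T \ insert p R) = (T \ R).erase p := by
    ext x
    simp only [Finset.mem_sdiff, Finset.mem_erase, Finset.mem_insert]
    tauto
  rw [h1]
  exact Finset.card_erase_add_one (Finset.mem_sdiff.mpr ⟨hp, hpR⟩)

lemma sum_powerset_pair_cancel {M : Type*} [AddCommGroup M] [Module K M]
    (T : Finset (Fin r)) (p : Fin r) (hp : p ∈ T) (G : Finset (Fin r) → M)
    (hG : ∀ R ⊆ T.erase p, G (insert p R) = G R) :
    ∑ R ∈ T.powerset, ((-1:K)^((T \ R).card)) • G R = 0 := by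
  have hT : T.powerset = (insert p (T.erase p)).powerset := by
    rw [Finset.insert_erase hp]
  rw [hT, Finset.sum_powerset_insert (Finset.notMem_erase p T)]
  rw [← Finset.sum_add_distrib]
  apply Finset.sum_eq_zero
  intro R hR
  rw [Finset.mem_powerset] at hR
  have hpR : p ∉ R := fun h => Finset.notMem_erase p T (hR h)
  rw [hG R hR]
  have hcard := sdiff_insert_card (r := r) hp hpR
  rw [← hcard, pow_succ, ← add_smul]
  have hc : (-1:K)^((T \ insert p R).card) * -1 + (-1:K)^((T \ insert p R).card) = 0 := by
    ring
  rw [hc, zero_smul]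

noncomputable def bvalu {k : ℕ} (b : Idx r m (k+1)) : Idx r m k →₀ K :=
  ∑ p ∈ b.1.1.attach,
    if (b.2 p.1 p.2).val = 0 then sgn K b.1.1 p.1 • Finsupp.single (er b p.1 p.2) (1:K) else 0

noncomputable def Du (k : ℕ) : (Idx r m (k+1) →₀ K) →ₗ[K] (Idx r m k →₀ K) :=
  mkLin K (bvalu K)

lemma bval_dite {k : ℕ} (b : Idx r m (k+1)) :
    bval K r m k b
      = ∑ p : Fin r, if h : p ∈ b.1.1 then
          sgn K b.1.1 p • Finsupp.single (er b p h) (1:K) else 0 := by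
  rw [show bval K r m k b
      = ∑ p ∈ b.1.1.attach, sgn K b.1.1 p.1 • Finsupp.single (er b p.1 p.2) (1:K) from rfl]
  exact sum_attach_dite b.1.1 (fun p h => sgn K b.1.1 p • Finsupp.single (er b p h) 1)

lemma bvalu_dite {k : ℕ} (b : Idx r m (k+1)) :
    bvalu K b
      = ∑ p : Fin r, if h : p ∈ b.1.1 then
          (if (b.2 p h).val = 0 then sgn K b.1.1 p • Finsupp.single (er b p h) (1:K) else 0)
        else 0 :=
  sum_attach_dite b.1.1
    (fun p h => if (b.2 p h).val = 0 then sgn K b.1.1 p • Finsupp.single (er b p h) (1:K) else 0)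

lemma Dmap_single {k : ℕ} (b : Idx r m (k+1)) (c : K) :
    Dmap K r m k (Finsupp.single b c) = c • bval K r m k b :=
  mkLin_single K (bval K r m k) b c

lemma intertwine (k : ℕ) :
    (Dmap K r m k).comp (Phi K (k+1)) = (Phi K k).comp (Du K k) := by
  apply Finsupp.lhom_ext
  intro b c
  simp only [LinearMap.comp_apply]
  show Dmap K r m k (mkLin K (phival K) (Finsupp.single b c))
    = Phi K k (mkLin K (bvalu K) (Finsupp.single b c))
  rw [mkLin_single, mkLin_single, map_smul, map_smul]
  congr 1
  unfold phival
  rw [map_sum]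
  have hL : ∀ R ∈ (Tset b).powerset,
      Dmap K r m k (((-1:K)^((Tset b \ R).card)) • Finsupp.single (zo b R) 1)
        = ∑ p : Fin r, (if h : p ∈ b.1.1 then
            ((-1:K)^((Tset b \ R).card)) • sgn K b.1.1 p •
              Finsupp.single (zo (er b p h) R) (1:K)
          else 0) := by
    intro R _
    rw [map_smul, Dmap_single, one_smul, bval_dite, Finset.smul_sum]
    apply Finset.sum_congr rfl
    intro p _
    rw [smul_dite]
    simp only [zo_set]
    by_cases h : p ∈ b.1.1
    · erw [dif_pos h, dif_pos h, ← zo_er b R p h]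
    · erw [dif_neg h, dif_neg h, smul_zero]
  rw [Finset.sum_congr rfl hL, Finset.sum_comm]
  -- RHS side
  rw [bvalu_dite, map_sum]
  apply Finset.sum_congr rfl
  intro p _
  by_cases h : p ∈ b.1.1
  · simp only [dif_pos h]
    by_cases hv : (b.2 p h).val = 0
    · simp only [if_pos hv]
      rw [map_smul]
      show _ = sgn K b.1.1 p • (mkLin K (phival K) (Finsupp.single (er b p h) 1))
      rw [mkLin_single, one_smul]
      unfold phival
      rw [Tset_er b p h hv, Finset.smul_sum]
      apply Finset.sum_congr rfl
      intro R _
      rw [smul_comm]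
    · simp only [if_neg hv, map_zero]
      have hpT : p ∈ Tset b := (mem_Tset b p h).mpr hv
      apply sum_powerset_pair_cancel K (Tset b) p hpT
        (fun R => sgn K b.1.1 p • Finsupp.single (zo (er b p h) R) (1:K))
      intro R hR
      have hpR : p ∉ R := fun hc => Finset.notMem_erase p (Tset b) (hR hc)
      congr 1
      rw [zo_congr_erase (er b p h) (insert p R) p (Finset.notMem_erase p b.1.1),
        Finset.erase_insert hpR]
  · simp only [dif_neg h, map_zero]
    exact Finset.sum_const_zero

noncomputable def hval (hm : ∀ i, 1 ≤ m i) {k : ℕ} (b : Idx r m k) : Idx r m (k+1) →₀ K :=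
  if h : (Finset.univ \ Tset b).Nonempty then
    (if h2 : (Finset.univ \ Tset b).min' h ∈ b.1.1 then 0
     else sgn K b.1.1 ((Finset.univ \ Tset b).min' h) •
       Finsupp.single (ins b ((Finset.univ \ Tset b).min' h) h2 (hm _)) 1)
  else 0

noncomputable def Hu (hm : ∀ i, 1 ≤ m i) (k : ℕ) :
    (Idx r m k →₀ K) →ₗ[K] (Idx r m (k+1) →₀ K) :=
  mkLin K (hval K hm)

noncomputable def bndu :
    ∀ j : ℕ, (Idx r m j →₀ K) →ₗ[K] (Idx r m (j - 1) →₀ K)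
  | 0 => 0
  | (k + 1) => Du K k

noncomputable def Hnd (hm : ∀ i, 1 ≤ m i) :
    ∀ j : ℕ, (Idx r m (j - 1) →₀ K) →ₗ[K] (Idx r m j →₀ K)
  | 0 => 0
  | (k + 1) => Hu K hm k

-- the exchange identity between ins and er
lemma ins_er_swap (hm : ∀ i, 1 ≤ m i) {k : ℕ} (b : Idx r m (k+1)) (p q : Fin r)
    (hp : p ∈ b.1.1) (hq : q ∉ b.1.1)
    (hq' : q ∉ (er b p hp).1.1) (hp' : p ∈ (ins b q hq (hm q)).1.1) :
    ins (er b p hp) q hq' (hm q) = er (ins b q hq (hm q)) p hp' := by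
  apply Idx.ext
  · show insert q (b.1.1.erase p) = (insert q b.1.1).erase p
    have hpq : p ≠ q := fun h => hq (h ▸ hp)
    rw [Finset.erase_insert_of_ne hpq.symm]
  · intro i ha hb
    by_cases hiq : i = q
    · subst hiq
      have hi1 : i ∉ (er b p hp).1.1 := hq'
      apply Fin.ext
      rw [ins_val_self (er b p hp) i hq' (hm i) ha]
      have : ((ins b i hq (hm i)).2 i (Finset.mem_insert_self i _)).val = 0 :=
        ins_val_self b i hq (hm i) _
      rw [show (er (ins b i hq (hm i)) p hp').2 i hb
          = (ins b i hq (hm i)).2 i (Finset.mem_of_mem_erase hb) from rfl]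
      rw [ins_val_self b i hq (hm i) _]
    · have hiS : i ∈ b.1.1.erase p := by
        have : i ∈ insert q (b.1.1.erase p) := ha
        rcases Finset.mem_insert.mp this with h | h
        · exact absurd h hiq
        · exact h
      rw [ins_val_mem (er b p hp) q hq' (hm q) i ha hiS]
      rw [show (er (ins b q hq (hm q)) p hp').2 i hb
          = (ins b q hq (hm q)).2 i (Finset.mem_of_mem_erase hb) from rfl]
      rw [ins_val_mem b q hq (hm q) i _ (Finset.mem_of_mem_erase hiS)]
      rfl

lemma sgn_homotopy (S : Finset (Fin r)) (p i0 : Fin r) (hp : p ∈ S) (hi0 : i0 ∉ S)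
    (hne : p ≠ i0) :
    sgn K S i0 * sgn K (insert i0 S) p = -(sgn K S p * sgn K (S.erase p) i0) := by
  rw [sgn_insert S i0 p hi0, sgn_erase S p i0 hp]
  rcases lt_or_gt_of_ne hne with h | h
  · rw [if_neg (not_lt_of_gt h), if_pos h]
    ring
  · rw [if_pos h, if_neg (not_lt_of_gt h)]
    ring

lemma hval_eq (hm : ∀ i, 1 ≤ m i) {k : ℕ} (b : Idx r m k) (W : Finset (Fin r))
    (hW : Tset b = W) (hne' : (Finset.univ \ W).Nonempty)
    (h2' : (Finset.univ \ W).min' hne' ∉ b.1.1) :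
    hval K hm b = sgn K b.1.1 ((Finset.univ \ W).min' hne') •
      Finsupp.single (ins b ((Finset.univ \ W).min' hne') h2' (hm _)) 1 := by
  subst hW
  unfold hval
  rw [dif_pos hne', dif_neg h2']

lemma hval_zero (hm : ∀ i, 1 ≤ m i) {k : ℕ} (b : Idx r m k) (W : Finset (Fin r))
    (hW : Tset b = W) (hne' : (Finset.univ \ W).Nonempty)
    (h2' : (Finset.univ \ W).min' hne' ∈ b.1.1) :
    hval K hm b = 0 := by
  subst hW
  unfold hval
  rw [dif_pos hne', dif_pos h2']

lemma DuHu_single (hm : ∀ i, 1 ≤ m i) {k : ℕ} (b : Idx r m k) (c : K)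
    (hne : (Finset.univ \ Tset b).Nonempty)
    (h2 : (Finset.univ \ Tset b).min' hne ∉ b.1.1) :
    Du K k (Hu K hm k (Finsupp.single b c))
      = Finsupp.single b c + c • sgn K b.1.1 ((Finset.univ \ Tset b).min' hne) •
        ∑ p ∈ Finset.univ.erase ((Finset.univ \ Tset b).min' hne),
          (if hp : p ∈ b.1.1 then
            (if (b.2 p hp).val = 0 then
              sgn K (insert ((Finset.univ \ Tset b).min' hne) b.1.1) p •
                Finsupp.single
                  (er (ins b ((Finset.univ \ Tset b).min' hne) h2 (hm _)) p
                    (Finset.mem_insert_of_mem hp)) (1:K)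
             else 0)
           else 0) := by
  set i0 := (Finset.univ \ Tset b).min' hne with hi0
  set b' := ins b i0 h2 (hm i0) with hb'
  show Du K k (mkLin K (hval K hm) (Finsupp.single b c)) = _
  rw [mkLin_single, hval_eq K hm b (Tset b) rfl hne h2, map_smul, map_smul]
  show c • sgn K b.1.1 i0 • (mkLin K (bvalu K) (Finsupp.single b' 1)) = _
  rw [mkLin_single, one_smul, bvalu_dite]
  have hsplit : ∑ p : Fin r, (if hp : p ∈ b'.1.1 then
        (if (b'.2 p hp).val = 0 then sgn K b'.1.1 p • Finsupp.single (er b' p hp) (1:K) else 0)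
      else 0)
      = (sgn K b.1.1 i0 • Finsupp.single b 1)
        + ∑ p ∈ Finset.univ.erase i0, (if hp : p ∈ b.1.1 then
            (if (b.2 p hp).val = 0 then
              sgn K (insert i0 b.1.1) p • Finsupp.single (er b' p (Finset.mem_insert_of_mem hp)) (1:K)
             else 0)
           else 0) := by
    rw [← Finset.add_sum_erase Finset.univ _ (Finset.mem_univ i0)]
    congr 1
    · -- the i0 term
      have hmem : i0 ∈ b'.1.1 := Finset.mem_insert_self i0 b.1.1
      rw [dif_pos hmem, if_pos (ins_val_self b i0 h2 (hm i0) hmem)]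
      rw [show er b' i0 hmem = b from er_ins b i0 h2 (hm i0)]
      congr 1
      rw [show b'.1.1 = insert i0 b.1.1 from rfl, sgn_insert b.1.1 i0 i0 h2,
        if_neg (lt_irrefl i0)]
      rw [one_mul]
    · apply Finset.sum_congr rfl
      intro p hpe
      have hpne : p ≠ i0 := (Finset.mem_erase.mp hpe).1
      by_cases hp : p ∈ b.1.1
      · have hp' : p ∈ b'.1.1 := Finset.mem_insert_of_mem hp
        rw [dif_pos hp', dif_pos hp]
        have hval' : ((b'.2 p hp').val = 0) ↔ ((b.2 p hp).val = 0) := by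
          rw [ins_val_mem b i0 h2 (hm i0) p hp' hp]
        by_cases hv : (b.2 p hp).val = 0
        · rw [if_pos (hval'.mpr hv), if_pos hv]
          rfl
        · rw [if_neg (fun hc => hv (hval'.mp hc)), if_neg hv]
      · have hp' : p ∉ b'.1.1 := by
          show p ∉ insert i0 b.1.1
          rw [Finset.mem_insert]
          push_neg
          exact ⟨hpne, hp⟩
        rw [dif_neg hp', dif_neg hp]
  rw [hsplit, smul_add (sgn K b.1.1 i0), smul_add c]
  congr 1
  · rw [smul_smul (sgn K b.1.1 i0), sgn_mul_self, one_smul, Finsupp.smul_single,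
      smul_eq_mul, mul_one]

lemma Hu_bvalu (hm : ∀ i, 1 ≤ m i) {k : ℕ} (b : Idx r m (k+1)) :
    Hu K hm k (bvalu K b)
      = ∑ p : Fin r, (if hp : p ∈ b.1.1 then
          (if (b.2 p hp).val = 0 then sgn K b.1.1 p • hval K hm (er b p hp) else 0)
        else 0) := by
  rw [bvalu_dite, map_sum]
  apply Finset.sum_congr rfl
  intro p _
  by_cases hp : p ∈ b.1.1
  · rw [dif_pos hp, dif_pos hp]
    by_cases hv : (b.2 p hp).val = 0
    · rw [if_pos hv, if_pos hv, map_smul]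
      congr 1
      show mkLin K (hval K hm) (Finsupp.single (er b p hp) 1) = _
      rw [mkLin_single, one_smul]
    · rw [if_neg hv, if_neg hv, map_zero]
  · rw [dif_neg hp, dif_neg hp, map_zero]

lemma homotopy (hm : ∀ i, 1 ≤ m i) (j : ℕ) (hj : j < r) :
    ((Du K j).comp (Hu K hm j)) + ((Hnd K hm j).comp (bndu K j))
      = (LinearMap.id : (Idx r m j →₀ K) →ₗ[K] _) := by
  apply Finsupp.lhom_ext
  intro b c
  rw [LinearMap.add_apply, LinearMap.comp_apply, LinearMap.comp_apply, LinearMap.id_apply]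
  have hTS : Tset b ⊆ b.1.1 := Tset_subset b
  have hcard : b.1.1.card = j := b.1.2
  have hne : (Finset.univ \ Tset b).Nonempty := by
    rw [Finset.sdiff_nonempty]
    intro hsub
    have h1 : (Finset.univ : Finset (Fin r)).card ≤ (Tset b).card := Finset.card_le_card hsub
    rw [Finset.card_univ, Fintype.card_fin] at h1
    have h2 : (Tset b).card ≤ j :=
      le_trans (Finset.card_le_card hTS) (le_of_eq hcard)
    omega
  have hi0T : (Finset.univ \ Tset b).min' hne ∉ Tset b := by
    have h := Finset.min'_mem (Finset.univ \ Tset b) hne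
    rw [Finset.mem_sdiff] at h
    exact h.2
  cases j with
  | zero =>
    have hS0 : b.1.1 = ∅ := Finset.card_eq_zero.mp hcard
    have h2 : (Finset.univ \ Tset b).min' hne ∉ b.1.1 := by rw [hS0]; exact Finset.notMem_empty _
    show Du K 0 (Hu K hm 0 (Finsupp.single b c)) + Hnd K hm 0 ((0 : _ →ₗ[K] _) (Finsupp.single b c)) = _
    rw [LinearMap.zero_apply, map_zero, add_zero]
    rw [DuHu_single K hm b c hne h2]
    have hzero : ∀ p ∈ Finset.univ.erase ((Finset.univ \ Tset b).min' hne),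
        (if hp : p ∈ b.1.1 then
            (if (b.2 p hp).val = 0 then
              sgn K (insert ((Finset.univ \ Tset b).min' hne) b.1.1) p •
                Finsupp.single
                  (er (ins b ((Finset.univ \ Tset b).min' hne) h2 (hm _)) p
                    (Finset.mem_insert_of_mem hp)) (1:K)
             else 0)
           else 0) = 0 := by
      intro p _
      rw [dif_neg (by rw [hS0]; exact Finset.notMem_empty _)]
    rw [Finset.sum_congr rfl hzero, Finset.sum_const_zero, smul_zero, smul_zero, add_zero]
  | succ k =>
    set i0 := (Finset.univ \ Tset b).min' hne with hi0
    show Du K (k+1) (Hu K hm (k+1) (Finsupp.single b c))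
      + Hu K hm k (Du K k (Finsupp.single b c)) = _
    rw [show Du K k (Finsupp.single b c) = c • bvalu K b from mkLin_single K (bvalu K) b c,
      map_smul, Hu_bvalu K hm b]
    by_cases h2 : i0 ∈ b.1.1
    · -- i0 inside S : first piece vanishes, second gives identity
      have hvz : (b.2 i0 h2).val = 0 :=
        Classical.byContradiction fun h => hi0T ((mem_Tset b i0 h2).mpr h)
      rw [show Hu K hm (k+1) (Finsupp.single b c) = c • hval K hm b from
        mkLin_single K (hval K hm) b c]
      rw [hval_zero K hm b (Tset b) rfl hne h2, smul_zero, map_zero, zero_add]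
      have hterm : ∀ p ∈ (Finset.univ : Finset (Fin r)), p ≠ i0 →
          (if hp : p ∈ b.1.1 then
            (if (b.2 p hp).val = 0 then sgn K b.1.1 p • hval K hm (er b p hp) else 0)
          else 0) = 0 := by
        intro p _ hpne
        by_cases hp : p ∈ b.1.1
        · rw [dif_pos hp]
          by_cases hv : (b.2 p hp).val = 0
          · rw [if_pos hv]
            rw [hval_zero K hm (er b p hp) (Tset b) (Tset_er b p hp hv) hne
              (Finset.mem_erase.mpr ⟨fun hc => hpne hc.symm, h2⟩), smul_zero]
          · rw [if_neg hv]
        · rw [dif_neg hp]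
      rw [Finset.sum_eq_single_of_mem i0 (Finset.mem_univ i0) hterm]
      rw [dif_pos h2, if_pos hvz]
      rw [hval_eq K hm (er b i0 h2) (Tset b) (Tset_er b i0 h2 hvz) hne
        (Finset.notMem_erase i0 b.1.1)]
      rw [show ins (er b i0 h2) i0 (Finset.notMem_erase i0 b.1.1) (hm _) = b from
        ins_er b i0 h2 hvz (hm i0)]
      rw [show sgn K (er b i0 h2).1.1 i0 = sgn K (b.1.1.erase i0) i0 from rfl]
      rw [sgn_erase b.1.1 i0 i0 h2, if_neg (lt_irrefl i0), one_mul]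
      rw [smul_smul (sgn K b.1.1 i0) (sgn K b.1.1 i0), sgn_mul_self, one_smul,
        Finsupp.smul_single, smul_eq_mul, mul_one]
    · -- i0 outside S
      rw [DuHu_single K hm b c hne h2]
      rw [add_assoc]
      have hGsplit : ∑ p : Fin r, (if hp : p ∈ b.1.1 then
            (if (b.2 p hp).val = 0 then sgn K b.1.1 p • hval K hm (er b p hp) else 0)
          else 0)
          = ∑ p ∈ Finset.univ.erase i0, (if hp : p ∈ b.1.1 then
            (if (b.2 p hp).val = 0 then sgn K b.1.1 p • hval K hm (er b p hp) else 0)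
          else 0) := by
        rw [← Finset.add_sum_erase Finset.univ _ (Finset.mem_univ i0), dif_neg h2, zero_add]
      rw [hGsplit, Finset.smul_sum, Finset.smul_sum, Finset.smul_sum, ← Finset.sum_add_distrib]
      rw [add_eq_left]
      apply Finset.sum_eq_zero
      intro p hpe
      have hpne : p ≠ i0 := (Finset.mem_erase.mp hpe).1
      by_cases hp : p ∈ b.1.1
      · rw [dif_pos hp, dif_pos hp]
        by_cases hv : (b.2 p hp).val = 0
        · rw [if_pos hv, if_pos hv]
          rw [hval_eq K hm (er b p hp) (Tset b) (Tset_er b p hp hv) hne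
            (by
              show i0 ∉ b.1.1.erase p
              intro hc
              exact h2 (Finset.mem_of_mem_erase hc))]
          rw [ins_er_swap hm b p i0 hp h2 _ (Finset.mem_insert_of_mem hp)]
          rw [smul_smul, smul_smul, smul_smul, smul_smul]
          rw [show sgn K (er b p hp).1.1 i0 = sgn K (b.1.1.erase p) i0 from rfl]
          have hsg := sgn_homotopy K b.1.1 p i0 hp h2 hpne
          rw [show c * sgn K b.1.1 i0 * sgn K (insert i0 b.1.1) p
              = -(c * (sgn K b.1.1 p * sgn K (b.1.1.erase p) i0)) by rw [mul_assoc, hsg]; ring]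
          rw [show c * sgn K b.1.1 p * sgn K (b.1.1.erase p) i0
              = c * (sgn K b.1.1 p * sgn K (b.1.1.erase p) i0) by ring]
          rw [neg_smul]
          exact neg_add_cancel _
        · rw [if_neg hv, if_neg hv]; simp
      · rw [dif_neg hp, dif_neg hp]; simp

noncomputable def ddF {k : ℕ} (b : Idx r m (k+2)) (p q : Fin r) : Idx r m k →₀ K :=
  if hp : p ∈ b.1.1 then
    (if hq : q ∈ b.1.1 then
      (if hpq : q ≠ p then
        (if (b.2 p hp).val = 0 ∧ (b.2 q hq).val = 0 then
          (sgn K b.1.1 p * sgn K (b.1.1.erase p) q) •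
            Finsupp.single (er (er b p hp) q (Finset.mem_erase.mpr ⟨hpq, hq⟩)) (1:K)
         else 0)
       else 0)
     else 0)
  else 0

lemma ddF_skew {k : ℕ} (b : Idx r m (k+2)) (p q : Fin r) :
    ddF K b p q + ddF K b q p = 0 := by
  unfold ddF
  by_cases hp : p ∈ b.1.1
  · by_cases hq : q ∈ b.1.1
    · rw [dif_pos hp, dif_pos hq, dif_pos hq, dif_pos hp]
      by_cases hpq : q ≠ p
      · rw [dif_pos hpq, dif_pos (Ne.symm hpq)]
        by_cases hv : (b.2 p hp).val = 0 ∧ (b.2 q hq).val = 0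
        · rw [if_pos hv, if_pos ⟨hv.2, hv.1⟩]
          rw [sgn_skew b.1.1 q p hq hp hpq, neg_smul]
          rw [er_er b q p hq hp hpq]
          exact add_neg_cancel _
        · rw [if_neg hv, if_neg (fun hc => hv ⟨hc.2, hc.1⟩), add_zero]
      · rw [dif_neg hpq, dif_neg (fun hc => hpq hc.symm), add_zero]
    · rw [dif_pos hp, dif_neg hq, dif_neg hq, add_zero]
  · by_cases hq : q ∈ b.1.1
    · rw [dif_neg hp, dif_pos hq, dif_neg hp, zero_add]
    · rw [dif_neg hp, dif_neg hq, add_zero]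

lemma ddF_diag {k : ℕ} (b : Idx r m (k+2)) (p : Fin r) : ddF K b p p = 0 := by
  unfold ddF
  by_cases hp : p ∈ b.1.1
  · rw [dif_pos hp, dif_pos hp, dif_neg (by simp)]
  · rw [dif_neg hp]

lemma Du_bvalu {k : ℕ} (b : Idx r m (k+2)) :
    Du K k (bvalu K b) = ∑ p : Fin r, ∑ q : Fin r, ddF K b p q := by
  rw [bvalu_dite, map_sum]
  apply Finset.sum_congr rfl
  intro p _
  by_cases hp : p ∈ b.1.1
  · rw [dif_pos hp]
    by_cases hv : (b.2 p hp).val = 0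
    · rw [if_pos hv, map_smul]
      rw [show Du K k (Finsupp.single (er b p hp) (1:K)) = (1:K) • bvalu K (er b p hp) from
        mkLin_single K (bvalu K) (er b p hp) 1, one_smul, bvalu_dite, Finset.smul_sum]
      apply Finset.sum_congr rfl
      intro q _
      unfold ddF
      rw [dif_pos hp]
      by_cases hq : q ∈ b.1.1
      · rw [dif_pos hq]
        by_cases hpq : q ≠ p
        · have hqe : q ∈ (er b p hp).1.1 := Finset.mem_erase.mpr ⟨hpq, hq⟩
          rw [dif_pos hqe, dif_pos hpq]
          by_cases hv2 : (b.2 q hq).val = 0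
          · rw [if_pos (show ((er b p hp).2 q hqe).val = 0 from hv2),
              if_pos ⟨hv, hv2⟩, smul_smul]
            rfl
          · rw [if_neg (show ¬((er b p hp).2 q hqe).val = 0 from hv2),
              if_neg (fun hc => hv2 hc.2), smul_zero]
        · have hqe : q ∉ (er b p hp).1.1 := by
            push_neg at hpq
            subst hpq
            exact Finset.notMem_erase q b.1.1
          rw [dif_neg hqe, dif_neg hpq, smul_zero]
      · have hqe : q ∉ (er b p hp).1.1 :=
          fun hc => hq (Finset.mem_of_mem_erase hc)
        rw [dif_neg hqe, dif_neg hq, smul_zero]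
    · rw [if_neg hv]
      symm
      apply Finset.sum_eq_zero
      intro q _
      unfold ddF
      rw [dif_pos hp]
      by_cases hq : q ∈ b.1.1
      · rw [dif_pos hq]
        by_cases hpq : q ≠ p
        · rw [dif_pos hpq, if_neg (fun hc => hv hc.1)]
        · rw [dif_neg hpq]
      · rw [dif_neg hq]
  · rw [dif_neg hp]
    symm
    apply Finset.sum_eq_zero
    intro q _
    unfold ddF
    rw [dif_neg hp]

lemma DuDu (k : ℕ) : (Du K k).comp (Du K (k+1))
    = (0 : (Idx r m (k+2) →₀ K) →ₗ[K] (Idx r m k →₀ K)) := by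
  apply Finsupp.lhom_ext
  intro b c
  rw [LinearMap.comp_apply, LinearMap.zero_apply]
  rw [show Du K (k+1) (Finsupp.single b c) = c • bvalu K b from mkLin_single K (bvalu K) b c,
    map_smul, Du_bvalu]
  rw [← Finset.sum_product']
  rw [Finset.sum_involution (fun z _ => (z.2, z.1))
    (fun z _ => ddF_skew K b z.1 z.2)
    (fun z _ hz => fun hc => hz (by
      have h1 : z.2 = z.1 := congrArg Prod.fst hc
      rw [h1]
      exact ddF_diag K b z.1))
    (fun z _ => Finset.mem_product.mpr ⟨Finset.mem_univ _, Finset.mem_univ _⟩)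
    (fun z _ => rfl), smul_zero]

lemma bndu_Du (j : ℕ) (x : Idx r m (j+1) →₀ K) : bndu K j (Du K j x) = 0 := by
  cases j with
  | zero => rfl
  | succ k =>
    show ((Du K k).comp (Du K (k+1))) x = 0
    rw [DuDu K (k)]
    rfl

lemma exact_u (hm : ∀ i, 1 ≤ m i) (j : ℕ) (hj : j < r) :
    LinearMap.ker (bndu K j)
      = LinearMap.range (Du K j : (Idx r m (j+1) →₀ K) →ₗ[K] (Idx r m j →₀ K)) := by
  apply le_antisymm
  · intro x hx
    rw [LinearMap.mem_ker] at hx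
    have hid := LinearMap.ext_iff.mp (homotopy K hm j hj) x
    rw [LinearMap.add_apply, LinearMap.comp_apply, LinearMap.comp_apply, LinearMap.id_apply,
      hx, map_zero, add_zero] at hid
    exact ⟨Hu K hm j x, hid⟩
  · rintro _ ⟨y, rfl⟩
    rw [LinearMap.mem_ker]
    exact bndu_Du K j y

lemma bnd_phi (j : ℕ) (x : Idx r m j →₀ K) :
    bnd K r m j (Phi K j x) = Phi K (j-1) (bndu K j x) := by
  cases j with
  | zero =>
    show (0 : (Idx r m 0 →₀ K) →ₗ[K] _) (Phi K 0 x) = Phi K 0 ((0 : (Idx r m 0 →₀ K) →ₗ[K] _) x)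
    rw [LinearMap.zero_apply, LinearMap.zero_apply, map_zero]
  | succ k =>
    exact LinearMap.ext_iff.mp (intertwine K k) x

lemma Phi_inj (j : ℕ) (x : Idx r m j →₀ K) (hx : Phi K j x = 0) : x = 0 := by
  have := LinearMap.ext_iff.mp (Psi_Phi K j) x
  rw [LinearMap.comp_apply, LinearMap.id_apply, hx, map_zero] at this
  exact this.symm

lemma exact_e (hm : ∀ i, 1 ≤ m i) (j : ℕ) (hj : j < r) :
    LinearMap.ker (bnd K r m j) = LinearMap.range (Dmap K r m j) := by
  apply le_antisymm
  · intro x hx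
    rw [LinearMap.mem_ker] at hx
    set y := Psi K j x with hy
    have hxy : Phi K j y = x := LinearMap.ext_iff.mp (Phi_Psi K j) x
    have hky : bndu K j y = 0 := by
      apply Phi_inj K (j-1)
      rw [← bnd_phi K j y, hxy, hx]
    have : y ∈ LinearMap.range (Du K j) := by
      rw [← exact_u K hm j hj, LinearMap.mem_ker]
      exact hky
    obtain ⟨u, hu⟩ := this
    refine ⟨Phi K (j+1) u, ?_⟩
    have hint := LinearMap.ext_iff.mp (intertwine K j) u
    rw [LinearMap.comp_apply, LinearMap.comp_apply] at hint
    rw [hint, hu, hxy]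
  · rintro _ ⟨z, rfl⟩
    rw [LinearMap.mem_ker]
    set w := Psi K (j+1) z with hw
    have hzw : Phi K (j+1) w = z := LinearMap.ext_iff.mp (Phi_Psi K (j+1)) z
    have hint := LinearMap.ext_iff.mp (intertwine K j) w
    rw [LinearMap.comp_apply, LinearMap.comp_apply] at hint
    rw [← hzw, hint, bnd_phi K j, bndu_Du K j w, map_zero]

end Maps

instance instFiniteIdx (k : ℕ) : Finite (Idx r m k) := by unfold Idx; infer_instance
noncomputable instance instFintypeIdx (k : ℕ) : Fintype (Idx r m k) := Fintype.ofFinite _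

def idxEquiv (k : ℕ) : Idx r m k ≃
    Σ S : (Finset.univ.powersetCard k : Finset (Finset (Fin r))), ∀ i : S.1, Fin (m i.1) where
  toFun b := ⟨⟨b.1.1, by simp [Finset.mem_powersetCard, b.1.2]⟩, fun i => b.2 i.1 i.2⟩
  invFun c := ⟨⟨c.1.1, (Finset.mem_powersetCard.mp c.1.2).2⟩, fun i hi => c.2 ⟨i, hi⟩⟩
  left_inv b := rfl
  right_inv c := rfl

theorem card_Idx (k : ℕ) :
    Fintype.card (Idx r m k) = ∑ S ∈ Finset.univ.powersetCard k, ∏ i ∈ S, m i := by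
  rw [Fintype.card_congr (idxEquiv k), Fintype.card_sigma]
  rw [← Finset.sum_attach (Finset.univ.powersetCard k) (fun S => ∏ i ∈ S, m i)]
  apply Finset.sum_congr rfl
  intro S _
  rw [Fintype.card_pi, ← Finset.prod_attach S.1 (fun i => m i)]
  apply Finset.prod_congr rfl
  intro i _
  simp

theorem esym_eq_card (k : ℕ) : (Fintype.card (Idx r m k) : ℤ) = esym r m k := by
  rw [card_Idx]
  unfold esym
  push_cast
  rfl

theorem zval_zero : zval r m 0 = 1 := by
  unfold zval esym
  rw [Finset.range_zero, Finset.sum_empty, add_zero, Finset.powersetCard_zero,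
    Finset.sum_singleton, Finset.prod_empty]

theorem zval_succ (j : ℕ) : zval r m (j+1) = esym r m (j+1) - zval r m j := by
  unfold zval
  rw [Finset.sum_range_succ]
  have h1 : ((-1:ℤ))^(j+(j+1)) = -1 := Odd.neg_one_pow ⟨j, by ring⟩
  rw [h1]
  have h2 : ∀ i ∈ Finset.range j, ((-1:ℤ))^(i+(j+1)) * esym r m i
      = -(((-1:ℤ))^(i+j) * esym r m i) := by
    intro i _
    rw [show i+(j+1) = (i+j)+1 from by ring, pow_succ]
    ring
  rw [Finset.sum_congr rfl h2, Finset.sum_neg_distrib]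
  ring

section FinalThm
variable (K : Type*) [Field K]

noncomputable instance instFinDimV (k : ℕ) : Module.Finite K (Idx r m k →₀ K) :=
  Module.Finite.equiv (Finsupp.linearEquivFunOnFinite K K (Idx r m k)).symm

theorem key (hm : ∀ i, 1 ≤ m i) :
    ∀ j : ℕ, j ≤ r →
      (Module.finrank K (LinearMap.ker (bnd K r m j)) : ℤ) = zval r m j := by
  intro j
  induction j with
  | zero =>
    intro _
    rw [show bnd K r m 0 = 0 from rfl, LinearMap.ker_zero, finrank_top,
      Module.finrank_finsupp_self, zval_zero, esym_eq_card 0]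
    unfold esym
    rw [Finset.powersetCard_zero, Finset.sum_singleton, Finset.prod_empty]
  | succ j ih =>
    intro hjr
    have hj : j < r := hjr
    have hker : LinearMap.ker (bnd K r m (j+1)) = LinearMap.ker (Dmap K r m j) := rfl
    have hrn := LinearMap.finrank_range_add_finrank_ker (Dmap K r m j)
    have hex := exact_e K hm j hj
    have hV : Module.finrank K (Idx r m (j+1) →₀ K) = Fintype.card (Idx r m (j+1)) :=
      Module.finrank_finsupp_self K
    have hihv := ih (le_of_lt hj)
    rw [hker, zval_succ]
    rw [← hex] at hrn
    rw [hV] at hrn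
    have : (Module.finrank K (LinearMap.ker (Dmap K r m j)) : ℤ)
        = (Fintype.card (Idx r m (j+1)) : ℤ)
          - (Module.finrank K (LinearMap.ker (bnd K r m j)) : ℤ) := by
      have := congrArg (fun n : ℕ => (n : ℤ)) hrn
      push_cast at this
      linarith
    rw [this, hihv, esym_eq_card (j+1)]

end FinalThm
end

/-- The dimension over `K` of the kernel of the degree-`j` differential `∂'_j ⊗ K`
equals `z_j`, for every `0 ≤ j ≤ r`. -/
theorem finrank_ker_boundary (K : Type*) [Field K] (r : ℕ) (m : Fin r → ℕ)
    (hm : ∀ i, 1 ≤ m i) :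
    ∀ j : ℕ, j ≤ r →
      (Module.finrank K (LinearMap.ker (bnd K r m j)) : ℤ) = zval r m j :=
  key K hm
end

section
/- Let K be a field and d ≥ 1, and let D : V → W be a K-linear map between finite-dimensional K-vector spaces. Consider the K[ℤ/d]-linear map (τ − 1) ⊗ D : K[ℤ/d] ⊗ V → K[ℤ/d] ⊗ W, where τ generates ℤ/d. Then its kernel is isomorphic as a K[ℤ/d]-module to (K[ℤ/d] ⊗ ker D) ⊕ (K_triv ⊗ im D), where K_triv is the trivial one-dimensional module, and its image equals (τ − 1)K[ℤ/d] ⊗ im D. -/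
/-!
Let `σ = ∑ g` be the norm element of the group algebra of a finite cyclic group `G = ⟨τ⟩`.
In `K[G]` the kernel of multiplication by `τ - 1` is the line `K σ`, because an element fixed
by `τ` has constant coefficients. Every `K`-vector space `M` is flat, so on `K[G] ⊗ M` the kernel
of `τ - 1` is `σ ⊗ M`, and `m ↦ σ ⊗ m` is injective.

Choose a complement `C` of `ker D`, so that `K[G] ⊗ V = K[G] ⊗ ker D ⊕ K[G] ⊗ C`. The first
summand lies in the kernel of `(τ - 1) ⊗ D`; as `D` is injective on `C`, the kernel meets the
second summand in `σ ⊗ C ≅ C ≅ im D`, on which `G` acts trivially, and the modular law gives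
the decomposition. For the image, `K[G] ⊗ D` factors through a surjection onto `K[G] ⊗ im D`.
-/

open TensorProduct

/-- The canonical generator `τ` of `ℤ/d` viewed in the group algebra `K[ℤ/d]`. -/
noncomputable def tau (K : Type*) [Field K] (d : ℕ) :
    MonoidAlgebra K (Multiplicative (ZMod d)) :=
  MonoidAlgebra.of K (Multiplicative (ZMod d)) (Multiplicative.ofAdd (1 : ZMod d))

lemma LinearMap.baseChange_injective {R A M N : Type*} [CommRing R] [Ring A] [Algebra R A]
    [Module.Flat R A] [AddCommGroup M] [Module R M] [AddCommGroup N] [Module R N]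
    {f : M →ₗ[R] N} (hf : Function.Injective f) : Function.Injective (f.baseChange A) := by
  rw [LinearMap.baseChange_eq_ltensor]
  exact Module.Flat.lTensor_preserves_injective_linearMap f hf

namespace Submodule

variable {R M : Type*} (A : Type*) [CommRing R] [Ring A] [Algebra R A]
  [AddCommGroup M] [Module R M] {p q : Submodule R M}

lemma baseChange_sup : (p ⊔ q).baseChange A = p.baseChange A ⊔ q.baseChange A := by
  simp only [baseChange_eq_span, map_sup, ← span_union]
  rw [← span_span_of_tower R A (_ ∪ _), span_union, span_eq, span_eq]

lemma isCompl_baseChange (h : IsCompl p q) : IsCompl (p.baseChange A) (q.baseChange A) := by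
  have hπp : projectionOnto p q h ∘ₗ p.subtype = LinearMap.id := projectionOnto_comp_subtype h
  have hπq : projectionOnto p q h ∘ₗ q.subtype = 0 := by
    ext x; simp [projectionOnto_apply_right]
  constructor
  · rw [disjoint_iff_inf_le]
    rintro _ ⟨⟨y, rfl⟩, ⟨z, hz⟩⟩
    have := congr((projectionOnto p q h).baseChange A $hz)
    simp only [← LinearMap.comp_apply, ← LinearMap.baseChange_comp, hπp, hπq,
      LinearMap.baseChange_id, LinearMap.baseChange_zero, LinearMap.id_apply,
      LinearMap.zero_apply] at this
    simp [← this]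
  · rw [codisjoint_iff, ← baseChange_sup, h.sup_eq_top, baseChange_top]

end Submodule

lemma LinearMap.range_smul_baseChange {R A V W : Type*} [CommRing R] [CommRing A] [Algebra R A]
    [AddCommGroup V] [Module R V] [AddCommGroup W] [Module R W] (a : A) (D : V →ₗ[R] W) :
    LinearMap.range (a • D.baseChange A) =
      ((LinearMap.range D).baseChange A).map (a • LinearMap.id) := by
  have hfac : D.baseChange A = (LinearMap.range D).subtype.baseChange A ∘ₗ
      D.rangeRestrict.baseChange A := by
    rw [← LinearMap.baseChange_comp, LinearMap.subtype_comp_codRestrict]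
  rw [← LinearMap.id_comp (D.baseChange A), ← LinearMap.smul_comp, hfac, LinearMap.range_comp,
    LinearMap.range_comp_of_range_eq_top _
      (LinearMap.range_eq_top.2 (LinearMap.baseChange_surjective A D.surjective_rangeRestrict))]
  rfl

lemma Submodule.baseChange_ker_le_ker_smul_baseChange {R A V W : Type*} [CommRing R] [CommRing A]
    [Algebra R A] [AddCommGroup V] [Module R V] [AddCommGroup W] [Module R W]
    (a : A) (D : V →ₗ[R] W) :
    (LinearMap.ker D).baseChange A ≤ LinearMap.ker (a • D.baseChange A) := by
  rintro _ ⟨y, rfl⟩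
  rw [LinearMap.mem_ker, LinearMap.smul_apply, ← LinearMap.comp_apply,
    ← LinearMap.baseChange_comp, LinearMap.comp_ker_subtype, LinearMap.baseChange_zero,
    LinearMap.zero_apply, smul_zero]

lemma Multiplicative.mem_zpowers_ofAdd_one {d : ℕ} (x : Multiplicative (ZMod d)) :
    x ∈ Subgroup.zpowers (Multiplicative.ofAdd (1 : ZMod d)) := by
  obtain ⟨k, hk⟩ := ZMod.intCast_surjective x.toAdd
  exact ⟨k, by simp [← ofAdd_zsmul, hk]⟩

namespace MonoidAlgebra

variable (K : Type*) [CommRing K] (G : Type*) [Group G] [Fintype G]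

noncomputable def normElement : K[G] := ∑ g : G, of K G g

variable {G}

lemma of_mul_normElement (g : G) : of K G g * normElement K G = normElement K G := by
  simp only [normElement, Finset.mul_sum, ← map_mul]
  exact Fintype.sum_equiv (Equiv.mulLeft g) _ _ fun _ => rfl

lemma coeff_normElement (g : G) : (normElement K G).coeff g = 1 := by
  simp [normElement, coeff_sum, of_apply]

lemma normElement_ne_zero [Nontrivial K] : normElement K G ≠ 0 := fun h => by
  simpa [h] using coeff_normElement K (1 : G)

lemma exact_toSpanSingleton_normElement_mulLeft {g : G} (hg : ∀ x, x ∈ Subgroup.zpowers g) :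
    Function.Exact (LinearMap.toSpanSingleton K _ (normElement K G))
      (LinearMap.mulLeft K (of K G g - 1)) := by
  intro y
  simp only [LinearMap.mulLeft_apply, Set.mem_range, LinearMap.toSpanSingleton_apply]
  constructor
  · intro hy
    have hfix : Representation.leftRegular K G g y = of K G g * y := by
      ext γ
      simp [coeff_single_mul_apply, of_apply]
    rw [sub_mul, one_mul, sub_eq_zero, ← hfix] at hy
    have hconst := Representation.coeff_of_leftRegular_of_generator g hg y hy
    exact ⟨y.coeff g, by ext γ; simp [coeff_normElement, hconst]⟩
  · rintro ⟨c, rfl⟩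
    rw [mul_smul_comm, sub_mul, of_mul_normElement, one_mul, sub_self, smul_zero]

section TensorProduct

variable {K : Type*} [Field K] {G : Type*} [Group G] [Fintype G]
  (M : Type*) [AddCommGroup M] [Module K M]

lemma rTensor_toSpanSingleton_normElement :
    (LinearMap.toSpanSingleton K _ (normElement K G)).rTensor M =
      TensorProduct.mk K K[G] M (normElement K G) ∘ₗ (TensorProduct.lid K M) := by
  ext; simp

lemma mk_normElement_injective :
    Function.Injective (TensorProduct.mk K K[G] M (normElement K G)) := by
  have hσ := Module.Flat.rTensor_preserves_injective_linearMap (M := M)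
    (LinearMap.toSpanSingleton K _ (normElement K G))
    (smul_left_injective K (normElement_ne_zero K))
  rw [rTensor_toSpanSingleton_normElement] at hσ
  simpa using hσ

variable {M}

lemma of_sub_one_smul_eq_zero_iff {g : G} (hg : ∀ x, x ∈ Subgroup.zpowers g)
    (x : K[G] ⊗[K] M) :
    (of K G g - 1) • x = 0 ↔ ∃ m, normElement K G ⊗ₜ[K] m = x := by
  have := Module.Flat.rTensor_exact M (exact_toSpanSingleton_normElement_mulLeft K hg) x
  rwa [rTensor_toSpanSingleton_normElement, LinearMap.coe_comp, LinearEquiv.coe_coe,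
    EquivLike.range_comp] at this

lemma of_smul_normElement_tmul (g : G) (m : M) :
    of K G g • normElement K G ⊗ₜ[K] m = normElement K G ⊗ₜ[K] m := by
  rw [smul_tmul', smul_eq_mul, of_mul_normElement]

end TensorProduct

section Kernel

variable {K : Type*} [Field K] {G : Type*} [CommGroup G] [Fintype G] {g : G}
  {V W : Type*} [AddCommGroup V] [Module K V] [AddCommGroup W] [Module K W]
  {D : V →ₗ[K] W} {C : Submodule K V}

lemma restrictScalars_baseChange_inf_ker_sub_one_smul_baseChange
    (hg : ∀ x, x ∈ Subgroup.zpowers g) (hC : Function.Injective (D.domRestrict C)) :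
    (C.baseChange K[G] ⊓ LinearMap.ker ((of K G g - 1) • D.baseChange K[G])).restrictScalars K =
      C.map (TensorProduct.mk K K[G] V (normElement K G)) := by
  ext x
  constructor
  · rintro ⟨⟨y, rfl⟩, hy⟩
    have hy' : (D.domRestrict C).baseChange K[G] ((of K G g - 1) • y) = 0 := by
      rw [map_smul, LinearMap.domRestrict, LinearMap.baseChange_comp, LinearMap.comp_apply]
      exact hy
    obtain ⟨c, rfl⟩ := (of_sub_one_smul_eq_zero_iff hg y).1
      (LinearMap.baseChange_injective hC (hy'.trans (map_zero _).symm))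
    exact ⟨c, c.2, rfl⟩
  · rintro ⟨c, hc, rfl⟩
    refine ⟨⟨normElement K G ⊗ₜ ⟨c, hc⟩, rfl⟩, ?_⟩
    rw [SetLike.mem_coe, LinearMap.mem_ker, LinearMap.smul_apply, TensorProduct.mk_apply,
      LinearMap.baseChange_tmul, of_sub_one_smul_eq_zero_iff hg]
    exact ⟨_, rfl⟩

end Kernel

end MonoidAlgebra

theorem ker_image_tau_sub_one_tensor_general (K : Type*) [Field K] (d : ℕ) (hd : 1 ≤ d)
    (V W : Type*) [AddCommGroup V] [Module K V]
    [AddCommGroup W] [Module K W] (D : V →ₗ[K] W) :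
    (∃ N₁ N₂ : Submodule (MonoidAlgebra K (Multiplicative (ZMod d)))
        (MonoidAlgebra K (Multiplicative (ZMod d)) ⊗[K] V),
      N₁ ⊓ N₂ = ⊥ ∧
      N₁ ⊔ N₂ = LinearMap.ker
        ((tau K d - 1) • D.baseChange (MonoidAlgebra K (Multiplicative (ZMod d)))) ∧
      Nonempty (N₁ ≃ₗ[MonoidAlgebra K (Multiplicative (ZMod d))]
        (MonoidAlgebra K (Multiplicative (ZMod d)) ⊗[K] (LinearMap.ker D))) ∧
      (∀ (g : Multiplicative (ZMod d)) (x : N₂),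
        MonoidAlgebra.of K (Multiplicative (ZMod d)) g • (x : MonoidAlgebra K (Multiplicative (ZMod d)) ⊗[K] V)
          = (x : MonoidAlgebra K (Multiplicative (ZMod d)) ⊗[K] V)) ∧
      Nonempty ((N₂.restrictScalars K) ≃ₗ[K] LinearMap.range D)) ∧
    LinearMap.range ((tau K d - 1) • D.baseChange (MonoidAlgebra K (Multiplicative (ZMod d))))
      = Submodule.map
          ((tau K d - 1) • (LinearMap.id :
            MonoidAlgebra K (Multiplicative (ZMod d)) ⊗[K] W →ₗ[MonoidAlgebra K (Multiplicative (ZMod d))]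
            MonoidAlgebra K (Multiplicative (ZMod d)) ⊗[K] W))
          (LinearMap.range ((LinearMap.range D).subtype.baseChange
            (MonoidAlgebra K (Multiplicative (ZMod d))))) := by
  have : NeZero d := ⟨by omega⟩
  obtain ⟨C, hC⟩ := (LinearMap.ker D).exists_isCompl
  have hDC : Function.Injective (D.domRestrict C) :=
    LinearMap.injective_domRestrict_iff.2 hC.symm.disjoint
  have hN₂ := MonoidAlgebra.restrictScalars_baseChange_inf_ker_sub_one_smul_baseChange
    (K := K) (G := Multiplicative (ZMod d)) Multiplicative.mem_zpowers_ofAdd_one hDC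
  have hcompl := Submodule.isCompl_baseChange (MonoidAlgebra K (Multiplicative (ZMod d))) hC
  refine ⟨⟨(LinearMap.ker D).baseChange _, C.baseChange _ ⊓ LinearMap.ker
    ((tau K d - 1) • D.baseChange (MonoidAlgebra K (Multiplicative (ZMod d)))),
      ?_, ?_, ?_, ?_, ?_⟩, ?_⟩
  · exact (hcompl.disjoint.mono_right inf_le_left).eq_bot
  · rw [← sup_inf_assoc_of_le _
      (Submodule.baseChange_ker_le_ker_smul_baseChange (tau K d - 1) D),
      hcompl.sup_eq_top, top_inf_eq]
  · exact ⟨(LinearEquiv.ofInjective _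
      (LinearMap.baseChange_injective (LinearMap.ker D).injective_subtype)).symm⟩
  · rintro g ⟨x, hx⟩
    obtain ⟨c, -, rfl⟩ : x ∈ C.map (TensorProduct.mk K _ V (MonoidAlgebra.normElement K _)) :=
      hN₂ ▸ hx
    exact MonoidAlgebra.of_smul_normElement_tmul g c
  · exact ⟨(LinearEquiv.ofEq _ _ hN₂).trans ((C.equivMapOfInjective _
      (MonoidAlgebra.mk_normElement_injective V)).symm.trans
      ((Submodule.quotientEquivOfIsCompl _ _ hC).symm.trans D.quotKerEquivRange))⟩
  · exact LinearMap.range_smul_baseChange _ D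

/-- For a `K`-linear map `D : V → W` between finite-dimensional spaces, the kernel of
`(τ − 1) ⊗ D : K[ℤ/d] ⊗ V → K[ℤ/d] ⊗ W` decomposes, as a `K[ℤ/d]`-module, as
`(K[ℤ/d] ⊗ ker D) ⊕ (K_triv ⊗ im D)` (a summand isomorphic to `K[ℤ/d] ⊗ ker D` plus a
summand with trivial group action, `K`-isomorphic to `im D`), and its image equals
`(τ − 1)K[ℤ/d] ⊗ im D`. -/
theorem ker_image_tau_sub_one_tensor (K : Type*) [Field K] (d : ℕ) (hd : 1 ≤ d)
    (V W : Type*) [AddCommGroup V] [Module K V] [FiniteDimensional K V]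
    [AddCommGroup W] [Module K W] [FiniteDimensional K W] (D : V →ₗ[K] W) :
    (∃ N₁ N₂ : Submodule (MonoidAlgebra K (Multiplicative (ZMod d)))
        (MonoidAlgebra K (Multiplicative (ZMod d)) ⊗[K] V),
      N₁ ⊓ N₂ = ⊥ ∧
      N₁ ⊔ N₂ = LinearMap.ker
        ((tau K d - 1) • D.baseChange (MonoidAlgebra K (Multiplicative (ZMod d)))) ∧
      Nonempty (N₁ ≃ₗ[MonoidAlgebra K (Multiplicative (ZMod d))]
        (MonoidAlgebra K (Multiplicative (ZMod d)) ⊗[K] (LinearMap.ker D))) ∧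
      (∀ (g : Multiplicative (ZMod d)) (x : N₂),
        MonoidAlgebra.of K (Multiplicative (ZMod d)) g • (x : MonoidAlgebra K (Multiplicative (ZMod d)) ⊗[K] V)
          = (x : MonoidAlgebra K (Multiplicative (ZMod d)) ⊗[K] V)) ∧
      Nonempty ((N₂.restrictScalars K) ≃ₗ[K] LinearMap.range D)) ∧
    LinearMap.range ((tau K d - 1) • D.baseChange (MonoidAlgebra K (Multiplicative (ZMod d))))
      = Submodule.map
          ((tau K d - 1) • (LinearMap.id :
            MonoidAlgebra K (Multiplicative (ZMod d)) ⊗[K] W →ₗ[MonoidAlgebra K (Multiplicative (ZMod d))]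
            MonoidAlgebra K (Multiplicative (ZMod d)) ⊗[K] W))
          (LinearMap.range ((LinearMap.range D).subtype.baseChange
            (MonoidAlgebra K (Multiplicative (ZMod d))))) :=
  ker_image_tau_sub_one_tensor_general K d hd V W D
end

section
/- Let K be a field and D : V → W a K-linear map of finite-dimensional K-vector spaces, and let τ be a generator of ℤ in the Laurent ring K[ℤ]. Then the kernel of (τ − 1) ⊗ D : K[ℤ] ⊗ V → K[ℤ] ⊗ W is K[ℤ] ⊗ ker D, and the cokernel is isomorphic as a K[ℤ]-module to (K[ℤ] ⊗ coker D) ⊕ (K_triv ⊗ im D), where K_triv = K[ℤ]/(τ − 1) is the trivial module. -/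
open TensorProduct

/-- The canonical generator `τ` of `ℤ` viewed in the Laurent group algebra `K[ℤ]`. -/
noncomputable def tauZ (K : Type*) [Field K] : MonoidAlgebra K (Multiplicative ℤ) :=
  MonoidAlgebra.of K (Multiplicative ℤ) (Multiplicative.ofAdd (1 : ℤ))

/-- Abbreviation for the Laurent group algebra. -/
abbrev LaurentA (K : Type*) [Field K] := MonoidAlgebra K (Multiplicative ℤ)

section Aux

variable (K : Type*) [Field K]

/-- The augmentation map `K[ℤ] → K`. -/
noncomputable def augA : LaurentA K →ₐ[K] K :=
  MonoidAlgebra.lift K K (Multiplicative ℤ) 1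

lemma augA_of (g : Multiplicative ℤ) :
    augA K (MonoidAlgebra.of K (Multiplicative ℤ) g) = 1 := by
  simp [augA]

lemma augA_tau_sub_one : augA K (tauZ K - 1) = 0 := by
  rw [map_sub, map_one, tauZ, augA_of, sub_self]

lemma tau_sub_one_ne_zero : tauZ K - 1 ≠ 0 := by
  rw [sub_ne_zero, tauZ]
  intro h
  have h1 : MonoidAlgebra.of K (Multiplicative ℤ) (Multiplicative.ofAdd (1 : ℤ)) =
      MonoidAlgebra.of K (Multiplicative ℤ) 1 := by rw [h, map_one]
  have := MonoidAlgebra.of_injective h1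
  exact absurd (congrArg Multiplicative.toAdd this) (by decide)

lemma tau_mul_of_neg_one :
    tauZ K * MonoidAlgebra.of K (Multiplicative ℤ) (Multiplicative.ofAdd (-1 : ℤ)) = 1 := by
  have h : Multiplicative.ofAdd (1 : ℤ) * Multiplicative.ofAdd (-1 : ℤ) = 1 := by
    rw [← ofAdd_add]; norm_num
  rw [tauZ, ← map_mul, h, map_one]

lemma tau_sub_one_dvd_aux (n : ℤ) :
    (tauZ K - 1) ∣ (MonoidAlgebra.of K (Multiplicative ℤ) (Multiplicative.ofAdd n) - 1) := by
  induction n using Int.induction_on with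
  | zero => rw [ofAdd_zero, map_one, sub_self]; exact dvd_zero _
  | succ n ih =>
    have h : Multiplicative.ofAdd ((n : ℤ) + 1) =
        Multiplicative.ofAdd (n : ℤ) * Multiplicative.ofAdd (1 : ℤ) := rfl
    rw [h, map_mul]
    have : MonoidAlgebra.of K (Multiplicative ℤ) (Multiplicative.ofAdd (n : ℤ)) * tauZ K - 1
        = MonoidAlgebra.of K (Multiplicative ℤ) (Multiplicative.ofAdd (n : ℤ)) * (tauZ K - 1)
          + (MonoidAlgebra.of K (Multiplicative ℤ) (Multiplicative.ofAdd (n : ℤ)) - 1) := by ring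
    rw [show MonoidAlgebra.of K (Multiplicative ℤ) (Multiplicative.ofAdd (1 : ℤ)) = tauZ K from rfl,
      this]
    exact dvd_add (Dvd.intro_left _ rfl) ih
  | pred n ih =>
    set b := MonoidAlgebra.of K (Multiplicative ℤ) (Multiplicative.ofAdd (-(n : ℤ) - 1)) with hb
    have hmul : tauZ K * b = MonoidAlgebra.of K (Multiplicative ℤ) (Multiplicative.ofAdd (-(n : ℤ))) := by
      rw [tauZ, hb, ← map_mul]
      congr 1
      rw [← ofAdd_add]
      congr 1
      ring
    have h1 : (tauZ K - 1) ∣ tauZ K * (b - 1) := by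
      have : tauZ K * (b - 1) =
          (MonoidAlgebra.of K (Multiplicative ℤ) (Multiplicative.ofAdd (-(n : ℤ))) - 1)
            - (tauZ K - 1) := by rw [← hmul]; ring
      rw [this]
      exact dvd_sub ih dvd_rfl
    have h2 : b - 1 = MonoidAlgebra.of K (Multiplicative ℤ) (Multiplicative.ofAdd (-1 : ℤ)) *
        (tauZ K * (b - 1)) := by
      rw [← mul_assoc, mul_comm (MonoidAlgebra.of K (Multiplicative ℤ) (Multiplicative.ofAdd (-1 : ℤ))) (tauZ K),
        tau_mul_of_neg_one, one_mul]
    rw [h2]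
    exact Dvd.dvd.mul_left h1 _

lemma tau_sub_one_dvd (g : Multiplicative ℤ) :
    (tauZ K - 1) ∣ (MonoidAlgebra.of K (Multiplicative ℤ) g - 1) :=
  tau_sub_one_dvd_aux K (Multiplicative.toAdd g)

lemma tau_sub_one_dvd_sub_aug (x : LaurentA K) :
    (tauZ K - 1) ∣ (x - algebraMap K (LaurentA K) (augA K x)) := by
  induction x using MonoidAlgebra.induction_on with
  | of g =>
    rw [augA_of, map_one]
    exact tau_sub_one_dvd K g
  | add x y hx hy =>
    have : x + y - algebraMap K (LaurentA K) (augA K (x + y))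
        = (x - algebraMap K (LaurentA K) (augA K x))
          + (y - algebraMap K (LaurentA K) (augA K y)) := by
      rw [map_add, map_add]; ring
    rw [this]
    exact dvd_add hx hy
  | smul r x hx =>
    have h1 : augA K (r • x) = r * augA K x := by rw [map_smul, smul_eq_mul]
    have h2 : r • x - algebraMap K (LaurentA K) (augA K (r • x))
        = r • (x - algebraMap K (LaurentA K) (augA K x)) := by
      rw [h1, map_mul, smul_sub, ← Algebra.smul_def]
    rw [h2, Algebra.smul_def]
    exact Dvd.dvd.mul_left hx _

lemma tau_sub_one_dvd_of_aug_eq_zero {x : LaurentA K} (hx : augA K x = 0) :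
    (tauZ K - 1) ∣ x := by
  have := tau_sub_one_dvd_sub_aug K x
  rwa [hx, map_zero, sub_zero] at this

end Aux

set_option maxHeartbeats 1600000
set_option synthInstance.maxHeartbeats 400000

/-- For a `K`-linear map `D : V → W` between finite-dimensional spaces, the kernel of
`(τ − 1) ⊗ D : K[ℤ] ⊗ V → K[ℤ] ⊗ W` equals `K[ℤ] ⊗ ker D`, and its cokernel
decomposes, as a `K[ℤ]`-module, as `(K[ℤ] ⊗ coker D) ⊕ (K_triv ⊗ im D)` (a summand
isomorphic to `K[ℤ] ⊗ coker D` plus a summand with trivial group action which is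
`K`-isomorphic to `im D`). -/
theorem ker_coker_tau_sub_one_tensor_laurent (K : Type*) [Field K]
    (V W : Type*) [AddCommGroup V] [Module K V] [FiniteDimensional K V]
    [AddCommGroup W] [Module K W] [FiniteDimensional K W] (D : V →ₗ[K] W) :
    LinearMap.ker ((tauZ K - 1) • D.baseChange (MonoidAlgebra K (Multiplicative ℤ)))
      = LinearMap.range ((LinearMap.ker D).subtype.baseChange (MonoidAlgebra K (Multiplicative ℤ))) ∧
    ∃ N₁ N₂ : Submodule (MonoidAlgebra K (Multiplicative ℤ))
        ((MonoidAlgebra K (Multiplicative ℤ) ⊗[K] W) ⧸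
          LinearMap.range ((tauZ K - 1) • D.baseChange (MonoidAlgebra K (Multiplicative ℤ)))),
      N₁ ⊓ N₂ = ⊥ ∧ N₁ ⊔ N₂ = ⊤ ∧
      Nonempty (N₁ ≃ₗ[MonoidAlgebra K (Multiplicative ℤ)]
        (MonoidAlgebra K (Multiplicative ℤ) ⊗[K] (W ⧸ LinearMap.range D))) ∧
      (∀ (g : Multiplicative ℤ) (x : N₂),
        MonoidAlgebra.of K (Multiplicative ℤ) g • (x :
          (MonoidAlgebra K (Multiplicative ℤ) ⊗[K] W) ⧸
            LinearMap.range ((tauZ K - 1) • D.baseChange (MonoidAlgebra K (Multiplicative ℤ))))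
          = (x : (MonoidAlgebra K (Multiplicative ℤ) ⊗[K] W) ⧸
            LinearMap.range ((tauZ K - 1) • D.baseChange (MonoidAlgebra K (Multiplicative ℤ))))) ∧
      Nonempty ((N₂.restrictScalars K) ≃ₗ[K] LinearMap.range D) := by
  classical
  set t : LaurentA K := tauZ K - 1 with ht_def
  have ht : t ≠ 0 := tau_sub_one_ne_zero K
  letI : NoZeroSMulDivisors (LaurentA K) (LaurentA K ⊗[K] V) :=
    ⟨fun {_ _} h => smul_eq_zero.1 h⟩
  set f := D.baseChange (LaurentA K) with hf_def
  set F := t • f with hF_def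
  set I := LinearMap.range D with hI_def
  obtain ⟨C, hC⟩ := Submodule.exists_isCompl I
  set j := I.subtype.baseChange (LaurentA K) with hj_def
  set AI := LinearMap.range j with hAI_def
  set AC := LinearMap.range (C.subtype.baseChange (LaurentA K)) with hAC_def
  set R := LinearMap.range F with hR_def
  set π := R.mkQ with hπ_def
  -- basic facts
  have hsurjRR : Function.Surjective (D.rangeRestrict.baseChange (LaurentA K)) := by
    show Function.Surjective (D.rangeRestrict.lTensor (LaurentA K))
    exact LinearMap.lTensor_surjective _ (LinearMap.surjective_rangeRestrict D)
  have hfd : f = j ∘ₗ (D.rangeRestrict.baseChange (LaurentA K)) := by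
    rw [hf_def, hj_def, ← LinearMap.baseChange_comp]
    congr 1
  have hrange_f : LinearMap.range f = AI := by
    rw [hfd, LinearMap.range_comp_of_range_eq_top _ (LinearMap.range_eq_top.mpr hsurjRR), hAI_def]
  have htAI : ∀ z ∈ AI, t • z ∈ R := by
    intro z hz
    rw [← hrange_f] at hz
    obtain ⟨x, rfl⟩ := hz
    exact ⟨x, rfl⟩
  have hRAI : R ≤ AI := by
    rintro _ ⟨x, rfl⟩
    have : F x = t • f x := rfl
    rw [this]
    exact AI.smul_mem t (hrange_f ▸ LinearMap.mem_range_self f x)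
  -- projection onto AI along AC
  set p := I.projectionOnto C hC with hp_def
  set P := ((I.subtype ∘ₗ p).baseChange (LaurentA K)) with hP_def
  have hPAI : ∀ z ∈ AI, P z = z := by
    rintro _ ⟨y, rfl⟩
    rw [hP_def, hj_def, ← LinearMap.comp_apply, ← LinearMap.baseChange_comp]
    have hcomp : (I.subtype ∘ₗ p) ∘ₗ I.subtype = I.subtype := by
      ext v; simp [hp_def, Submodule.projectionOnto_apply_left]
    rw [hcomp]
  have hPAC : ∀ z ∈ AC, P z = 0 := by
    rintro _ ⟨y, rfl⟩
    rw [hP_def, ← LinearMap.comp_apply, ← LinearMap.baseChange_comp]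
    have hcomp : (I.subtype ∘ₗ p) ∘ₗ C.subtype = 0 := by
      ext v; simp [hp_def, Submodule.projectionOnto_apply_right]
    rw [hcomp, LinearMap.baseChange_zero, LinearMap.zero_apply]
  have hinf : AI ⊓ AC = ⊥ := by
    rw [eq_bot_iff]
    rintro x ⟨hxI, hxC⟩
    have h1 := hPAI x hxI
    have h2 := hPAC x hxC
    rw [Submodule.mem_bot, ← h1, h2]
  have hsup : AI ⊔ AC = ⊤ := by
    rw [eq_top_iff]
    rintro x -
    induction x using TensorProduct.induction_on with
    | zero => exact Submodule.zero_mem _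
    | tmul a w =>
      have hw : w ∈ I ⊔ C := by rw [hC.sup_eq_top]; trivial
      obtain ⟨i, hi, c, hc, rfl⟩ := Submodule.mem_sup.mp hw
      rw [TensorProduct.tmul_add]
      refine Submodule.add_mem _ (Submodule.mem_sup_left ⟨a ⊗ₜ ⟨i, hi⟩, by simp [hj_def]⟩)
        (Submodule.mem_sup_right ⟨a ⊗ₜ ⟨c, hc⟩, by simp⟩)
    | add x y hx hy => exact Submodule.add_mem _ hx hy
  constructor
  · -- kernel statement
    have hexk := Module.Flat.lTensor_exact (LaurentA K) (LinearMap.exact_subtype_ker_map D)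
    ext x
    have h1 : F x = 0 ↔ f x = 0 := by
      rw [hF_def, LinearMap.smul_apply, smul_eq_zero]
      exact or_iff_right ht
    have h2 : f x = 0 ↔ x ∈ Set.range ((LinearMap.ker D).subtype.lTensor (LaurentA K)) := by
      rw [hf_def]
      exact hexk x
    rw [LinearMap.mem_ker, h1, h2, LinearMap.mem_range]
    constructor
    · rintro ⟨y, hy⟩; exact ⟨y, hy⟩
    · rintro ⟨y, hy⟩; exact ⟨y, hy⟩
  -- cokernel statement
  refine ⟨Submodule.map π AC, Submodule.map π AI, ?_, ?_, ?_, ?_, ?_⟩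
  · -- N₁ ⊓ N₂ = ⊥
    rw [eq_bot_iff]
    rintro x ⟨⟨c, hc, rfl⟩, i, hi, hip⟩
    have hmem : i - c ∈ R := by
      rw [← Submodule.Quotient.eq]
      exact hip
    have hcAI : c ∈ AI := by
      have : c = i - (i - c) := (sub_sub_cancel i c).symm
      rw [this]
      exact AI.sub_mem hi (hRAI hmem)
    have : c ∈ AI ⊓ AC := ⟨hcAI, hc⟩
    rw [hinf, Submodule.mem_bot] at this
    rw [this, Submodule.mem_bot, map_zero]
  · -- N₁ ⊔ N₂ = ⊤
    rw [← Submodule.map_sup, sup_comm AC AI, hsup, Submodule.map_top, Submodule.range_mkQ]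
  · -- N₁ ≃ A ⊗ (W ⧸ I)
    have hker0 : LinearMap.ker (π ∘ₗ AC.subtype) = ⊥ := by
      rw [eq_bot_iff]
      rintro ⟨x, hx⟩ hker
      rw [LinearMap.mem_ker, LinearMap.comp_apply] at hker
      have hxR : x ∈ R := by
        rwa [hπ_def, Submodule.mkQ_apply, Submodule.Quotient.mk_eq_zero] at hker
      have : x ∈ AI ⊓ AC := ⟨hRAI hxR, hx⟩
      rw [hinf, Submodule.mem_bot] at this
      rw [Submodule.mem_bot]
      exact Subtype.ext this
    have hinj : Function.Injective (π ∘ₗ AC.subtype) := by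
      intro a b hab
      apply Subtype.ext
      have hm : (a : LaurentA K ⊗[K] W) - b ∈ R := by rw [← Submodule.Quotient.eq]; exact hab
      have hm2 : (a : LaurentA K ⊗[K] W) - b ∈ AI ⊓ AC := ⟨hRAI hm, AC.sub_mem a.2 b.2⟩
      rw [hinf, Submodule.mem_bot] at hm2
      exact sub_eq_zero.mp hm2
    have hrange : LinearMap.range (π ∘ₗ AC.subtype) = Submodule.map π AC := by
      rw [LinearMap.range_comp, Submodule.range_subtype]
    have e1 : AC ≃ₗ[LaurentA K] Submodule.map π AC :=
      (LinearEquiv.ofInjective _ hinj).trans (LinearEquiv.ofEq _ _ hrange)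
    have hinjC : Function.Injective (C.subtype.baseChange (LaurentA K)) := by
      show Function.Injective (C.subtype.lTensor (LaurentA K))
      exact Module.Flat.lTensor_preserves_injective_linearMap _ C.injective_subtype
    have e2 : (LaurentA K ⊗[K] C) ≃ₗ[LaurentA K] AC :=
      LinearEquiv.ofInjective _ hinjC
    have e3 : C ≃ₗ[K] (W ⧸ I) := (Submodule.quotientEquivOfIsCompl I C hC).symm
    exact ⟨e1.symm.trans (e2.symm.trans (LinearEquiv.baseChange K (LaurentA K) _ _ e3))⟩
  · -- trivial action on N₂
    rintro g ⟨x, i, hiAI, rfl⟩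
    show MonoidAlgebra.of K (Multiplicative ℤ) g • π i = π i
    obtain ⟨u, hu⟩ := tau_sub_one_dvd K g
    have h0 : π ((MonoidAlgebra.of K (Multiplicative ℤ) g - 1) • i) = 0 := by
      rw [hu, mul_smul]
      have : u • i ∈ AI := AI.smul_mem u hiAI
      have hR : t • (u • i) ∈ R := htAI _ this
      rw [hπ_def, Submodule.mkQ_apply, Submodule.Quotient.mk_eq_zero]
      exact hR
    have h1 : (MonoidAlgebra.of K (Multiplicative ℤ) g - 1) • i
        = MonoidAlgebra.of K (Multiplicative ℤ) g • i - i := by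
      have := sub_smul (MonoidAlgebra.of K (Multiplicative ℤ) g) (1 : LaurentA K) i
      rwa [one_smul] at this
    rw [h1, map_sub] at h0
    have h3 := sub_eq_zero.mp h0
    have h2 : π (MonoidAlgebra.of K (Multiplicative ℤ) g • i)
        = MonoidAlgebra.of K (Multiplicative ℤ) g • π i := map_smul π _ i
    rw [← h2, h3]
  · -- N₂ as K-module is im D
    have hjinj : Function.Injective j := by
      rw [hj_def]
      show Function.Injective (I.subtype.lTensor (LaurentA K))
      exact Module.Flat.lTensor_preserves_injective_linearMap _ I.injective_subtype
    set φ := π ∘ₗ j with hφ_def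
    set R₀ : Submodule (LaurentA K) (LaurentA K ⊗[K] I) :=
      LinearMap.range (t • (LinearMap.id : LaurentA K ⊗[K] I →ₗ[LaurentA K] LaurentA K ⊗[K] I))
      with hR₀_def
    have hR₀_mem : ∀ z : LaurentA K ⊗[K] I, t • z ∈ R₀ := fun z => ⟨z, rfl⟩
    have hkerφ : LinearMap.ker φ = R₀ := by
      ext y
      constructor
      · intro hy
        rw [LinearMap.mem_ker, hφ_def, LinearMap.comp_apply, hπ_def, Submodule.mkQ_apply,
          Submodule.Quotient.mk_eq_zero] at hy
        obtain ⟨x, hx⟩ := hy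
        have hFx : F x = j (t • D.rangeRestrict.baseChange (LaurentA K) x) := by
          rw [map_smul, hF_def, LinearMap.smul_apply, hfd]
          rfl
        have : j (t • D.rangeRestrict.baseChange (LaurentA K) x) = j y := by
          rw [← hFx, hx]
        have hy' := hjinj this
        rw [← hy']
        exact hR₀_mem _
      · rintro ⟨z, rfl⟩
        rw [LinearMap.mem_ker, hφ_def, LinearMap.comp_apply]
        have : j ((t • (LinearMap.id : LaurentA K ⊗[K] I →ₗ[LaurentA K] LaurentA K ⊗[K] I)) z)
            = t • j z := by
          rw [LinearMap.smul_apply, LinearMap.id_apply, map_smul]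
        rw [this, hπ_def, Submodule.mkQ_apply, Submodule.Quotient.mk_eq_zero]
        exact htAI _ (LinearMap.mem_range_self j z)
    have hrangeφ : LinearMap.range φ = Submodule.map π AI := by
      rw [hφ_def, LinearMap.range_comp, ← hAI_def]
    have eA : Submodule.map π AI ≃ₗ[LaurentA K] ((LaurentA K ⊗[K] I) ⧸ R₀) :=
      ((Submodule.quotEquivOfEq _ _ hkerφ.symm).trans
        (φ.quotKerEquivRange.trans (LinearEquiv.ofEq _ _ hrangeφ))).symm
    -- the augmentation map on the tensor product
    set εl := (augA K).toLinearMap with hεl_def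
    set φ₂ : LaurentA K ⊗[K] I →ₗ[K] I :=
      (TensorProduct.lid K I).toLinearMap ∘ₗ (εl.rTensor I) with hφ₂_def
    have hφ₂_tmul : ∀ (a : LaurentA K) (w : I), φ₂ (a ⊗ₜ w) = augA K a • w := by
      intro a w
      simp [hφ₂_def, hεl_def]
    have hsurjφ₂ : Function.Surjective φ₂ := by
      intro w
      exact ⟨1 ⊗ₜ w, by rw [hφ₂_tmul, map_one, one_smul]⟩
    have hR₀_sub : (R₀.restrictScalars K : Set (LaurentA K ⊗[K] I)) ⊆ LinearMap.ker φ₂ := by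
      rintro y ⟨z, rfl⟩
      have hz : (t • (LinearMap.id : LaurentA K ⊗[K] I →ₗ[LaurentA K] LaurentA K ⊗[K] I)) z
          = t • z := rfl
      rw [SetLike.mem_coe, LinearMap.mem_ker, hz]
      clear hz
      induction z using TensorProduct.induction_on with
      | zero => rw [smul_zero, map_zero]
      | tmul a w =>
        have : t • (a ⊗ₜ[K] w) = (t * a) ⊗ₜ[K] w := by
          rw [TensorProduct.smul_tmul', smul_eq_mul]
        rw [this, hφ₂_tmul, map_mul, augA_tau_sub_one, zero_mul, zero_smul]
      | add x y hx hy =>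
        rw [smul_add, map_add, hx, hy, add_zero]
    have hkerφ₂ : LinearMap.ker φ₂ = R₀.restrictScalars K := by
      refine le_antisymm ?_ hR₀_sub
      intro y hy
      rw [LinearMap.mem_ker, hφ₂_def, LinearMap.comp_apply] at hy
      have hy' : εl.rTensor I y = 0 := by
        have := congrArg (TensorProduct.lid K I).symm hy
        rwa [LinearEquiv.coe_coe, LinearEquiv.symm_apply_apply, map_zero] at this
      have hexε := Module.Flat.rTensor_exact (M := I) (LinearMap.exact_subtype_ker_map εl)
      have hy'' : y ∈ Set.range ((LinearMap.ker εl).subtype.rTensor I) := (hexε y).mp hy'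
      obtain ⟨z, rfl⟩ := hy''
      clear hy hy'
      show ((LinearMap.ker εl).subtype.rTensor I) z ∈ R₀.restrictScalars K
      induction z using TensorProduct.induction_on with
      | zero => rw [map_zero]; exact Submodule.zero_mem _
      | tmul a w =>
        obtain ⟨a, ha⟩ := a
        have hdvd : t ∣ a := tau_sub_one_dvd_of_aug_eq_zero K ha
        obtain ⟨b, rfl⟩ := hdvd
        have : ((LinearMap.ker εl).subtype.rTensor I) ((⟨t * b, ha⟩ : LinearMap.ker εl) ⊗ₜ[K] w)
            = (t * b) ⊗ₜ[K] w := rfl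
        rw [this]
        have h2 : (t * b) ⊗ₜ[K] w = t • (b ⊗ₜ[K] w) := by
          rw [TensorProduct.smul_tmul', smul_eq_mul]
        rw [h2]
        exact hR₀_mem _
      | add x y hx hy =>
        rw [map_add]
        exact Submodule.add_mem _ hx hy
    have eK2 : ((LaurentA K ⊗[K] I) ⧸ (R₀.restrictScalars K)) ≃ₗ[K] I :=
      (Submodule.quotEquivOfEq _ _ hkerφ₂.symm).trans (φ₂.quotKerEquivOfSurjective hsurjφ₂)
    refine ⟨?_⟩
    exact (((Submodule.restrictScalarsEquiv K (LaurentA K) _ (Submodule.map π AI)).restrictScalars K).trans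
      ((eA.restrictScalars K).trans
        (((Submodule.Quotient.restrictScalarsEquiv K R₀).symm).trans eK2)))
end
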